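/- arXiv:2208.01004 — 12 statements merged into one kernel-verified Lean document; each statement's English description precedes it below -/
import Mathlib

section
/- Let q = p^t be a prime power, i a positive integer, α ∈ F_q nonzero, and β ∈ F_q. Then the polynomial X^(p^i) - αX - β has either zero, one, or p^d roots in F_q, where d = gcd(i, t). -/
/-!
The map `x ↦ x ^ p ^ i - α * x` is additive, so the set of roots is empty or a translate of its
kernel. A nonzero `x` lies in the kernel iff `x ^ (p ^ i - 1) = α`, and in the cyclic group `Fˣ`
of order `p ^ t - 1` this equation has no solution or
`gcd (p ^ t - 1) (p ^ i - 1) = p ^ gcd i t - 1` of them; together with `x = 0` the kernel has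
`1` or `p ^ gcd i t` elements.
-/

@[to_additive]
theorem MonoidHom.card_preimage_singleton_eq_zero_or_card_ker {G H : Type*} [Group G] [Group H]
    (f : G →* H) (b : H) :
    Nat.card (f ⁻¹' {b}) = 0 ∨ Nat.card (f ⁻¹' {b}) = Nat.card f.ker := by
  by_cases hb : b ∈ Set.range f
  · obtain ⟨a, rfl⟩ := hb
    exact Or.inr (Nat.card_congr (f.fiberEquivKer a))
  · exact Or.inl (Nat.card_eq_zero.2 (Or.inl ⟨fun x => hb ⟨x, x.2⟩⟩))

theorem card_pow_succ_eq_mul_self_eq_card_units_add_one {K : Type*} [GroupWithZero K] [Finite K]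
    (n : ℕ) (a : Kˣ) :
    Nat.card {x : K // x ^ (n + 1) = a * x} = Nat.card {u : Kˣ // u ^ n = a} + 1 := by
  have hset : {x : K | x ^ (n + 1) = a * x} = insert 0 ((↑) '' {u : Kˣ | u ^ n = a}) := by
    ext x
    rcases eq_or_ne x 0 with rfl | hx
    · simp
    · lift x to Kˣ using isUnit_iff_ne_zero.2 hx
      simp [pow_succ, ← Units.val_pow_eq_pow_val, Units.val_injective.eq_iff, hx]
  rw [← Set.coe_ofPred, Nat.card_coe_set_eq, hset, Set.ncard_insert_of_notMem (by simp),
    Set.ncard_image_of_injective _ Units.val_injective, ← Nat.card_coe_set_eq, Set.coe_ofPred]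

theorem FiniteField.card_units_pow_eq_eq_zero_or_gcd {K : Type*} [Field K] [Finite K]
    (m : ℕ) (a : Kˣ) :
    Nat.card {u : Kˣ // u ^ m = a} = 0 ∨
      Nat.card {u : Kˣ // u ^ m = a} = (Nat.card K - 1).gcd m := by
  rw [← Nat.card_units, ← IsCyclic.card_powMonoidHom_ker]
  exact (powMonoidHom m : Kˣ →* Kˣ).card_preimage_singleton_eq_zero_or_card_ker a

theorem card_pow_char_pow_sub_mul_sub_eq_zero_or {K : Type*} [Field K] (p : ℕ) [ExpChar K p]
    (i : ℕ) (α β : K) :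
    Nat.card {x : K // x ^ p ^ i - α * x - β = 0} = 0 ∨
      Nat.card {x : K // x ^ p ^ i - α * x - β = 0} = Nat.card {x : K // x ^ p ^ i = α * x} := by
  let L : K →+ K := (iterateFrobenius K p i).toAddMonoidHom - AddMonoidHom.mulLeft α
  have hfiber : {x : K // x ^ p ^ i - α * x - β = 0} ≃ L ⁻¹' {β} :=
    Equiv.subtypeEquivRight fun x => by simp [L, sub_eq_zero, iterateFrobenius_def]
  have hker : {x : K // x ^ p ^ i = α * x} ≃ L.ker :=
    Equiv.subtypeEquivRight fun x => by simp [L, sub_eq_zero, iterateFrobenius_def]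
  rw [Nat.card_congr hfiber, Nat.card_congr hker]
  exact L.card_preimage_singleton_eq_zero_or_card_ker β

theorem stmt_0_general {F : Type*} [Field F] [Fintype F] (p t i : ℕ) (hp : p.Prime)
    (hcard : Fintype.card F = p ^ t)
    (α β : F) (hα : α ≠ 0) :
    Nat.card {x : F // x ^ (p ^ i) - α * x - β = 0} ∈
      ({0, 1, p ^ Nat.gcd i t} : Set ℕ) := by
  have : Fact p.Prime := ⟨hp⟩
  have : CharP F p := charP_of_card_eq_prime_pow hcard
  have hker : Nat.card {x : F // x ^ p ^ i = α * x} =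
      Nat.card {u : Fˣ // u ^ (p ^ i - 1) = Units.mk0 α hα} + 1 := by
    rw [← card_pow_succ_eq_mul_self_eq_card_units_add_one,
      Nat.sub_add_cancel (Nat.one_le_pow i p hp.pos)]
    rfl
  have hunits := FiniteField.card_units_pow_eq_eq_zero_or_gcd (p ^ i - 1) (Units.mk0 α hα)
  rw [Nat.card_eq_fintype_card (α := F), hcard, Nat.pow_sub_one_gcd_pow_sub_one,
    Nat.gcd_comm] at hunits
  rcases card_pow_char_pow_sub_mul_sub_eq_zero_or p i α β with h | h
  · simp [h]
  · rcases hunits with h' | h' <;>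
      simp [h, hker, h', Nat.sub_add_cancel (Nat.one_le_pow _ p hp.pos)]

/-- Over `F_q` with `q = p^t`, the polynomial `X^(p^i) - αX - β`
(with `α ≠ 0`) has either zero, one, or `p^gcd(i,t)` roots. -/
theorem stmt_0 {F : Type*} [Field F] [Fintype F] (p t i : ℕ) (hp : p.Prime)
    (ht : 0 < t) (hi : 0 < i) (hcard : Fintype.card F = p ^ t)
    (α β : F) (hα : α ≠ 0) :
    Nat.card {x : F // x ^ (p ^ i) - α * x - β = 0} ∈
      ({0, 1, p ^ Nat.gcd i t} : Set ℕ) :=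
  stmt_0_general p t i hp hcard α β hα
end

section
/- Let q = 2^t, n, t, i > 0 integers, and γ ∈ F_{q^2} nonzero. Then f(X) = γX + Tr_{q^{2n}/q}(X^{2^i(q+1)}) is a permutation of F_{q^{2n}}. -/
/-- `f(X) = γX + Tr_{q^{2n}/q}(X^{2^i(q+1)})` with `γ ∈ F_{q^2}*` is a
permutation of `F_{q^{2n}}`, `q = 2^t`. -/
theorem stmt_2 {F : Type*} [Field F] [Fintype F] (t n i : ℕ)
    (ht : 0 < t) (hn : 0 < n) (hi : 0 < i)
    (hcard : Fintype.card F = (2 ^ t) ^ (2 * n))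
    (Tr : F → F) (hTr : ∀ x, Tr x = ∑ j ∈ Finset.range (2 * n), x ^ ((2 ^ t) ^ j))
    (γ : F) (hγ : γ ≠ 0) (hγq2 : γ ^ ((2 ^ t) ^ 2) = γ) :
    Function.Bijective (fun X : F => γ * X + Tr (X ^ (2 ^ i * (2 ^ t + 1)))) := by
  classical
  set q : ℕ := 2 ^ t with hqdef
  -- characteristic 2
  have hp : (ringChar F).Prime := CharP.char_is_prime F _
  have hdvd : ringChar F ∣ q ^ (2 * n) := by
    rw [← CharP.cast_eq_zero_iff F (ringChar F), ← hcard]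
    exact FiniteField.cast_card_eq_zero F
  have hchar2 : ringChar F = 2 := by
    have h1 : ringChar F ∣ 2 := by
      have := hp.dvd_of_dvd_pow hdvd
      rw [hqdef] at this
      exact hp.dvd_of_dvd_pow this
    exact (Nat.prime_dvd_prime_iff_eq hp Nat.prime_two).mp h1
  haveI : CharP F 2 := hchar2 ▸ ringChar.charP F
  have htwo : (2 : F) = 0 := by exact_mod_cast CharP.cast_eq_zero F 2
  have hself : ∀ a : F, a + a = 0 := CharTwo.add_self_eq_zero
  -- basic exponent facts
  have hq2 : ∀ j : ℕ, q ^ j = 2 ^ (t * j) := fun j => by rw [hqdef, ← pow_mul]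
  have hfrob : ∀ (a b : F) (j : ℕ), (a + b) ^ q ^ j = a ^ q ^ j + b ^ q ^ j := by
    intro a b j
    rw [hq2, add_pow_char_pow]
  -- Tr is additive
  have hTradd : ∀ a b : F, Tr (a + b) = Tr a + Tr b := by
    intro a b
    rw [hTr, hTr, hTr, ← Finset.sum_add_distrib]
    exact Finset.sum_congr rfl fun j _ => hfrob a b j
  -- Tr commutes with 2-power maps
  have hTrfrob : ∀ (a : F) (k : ℕ), Tr (a ^ 2 ^ k) = Tr a ^ 2 ^ k := by
    intro a k
    rw [hTr, hTr]
    rw [show (∑ j ∈ Finset.range (2 * n), a ^ q ^ j) ^ 2 ^ k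
        = iterateFrobenius F 2 k (∑ j ∈ Finset.range (2 * n), a ^ q ^ j) by
      rw [iterateFrobenius_def]]
    rw [map_sum]
    refine Finset.sum_congr rfl fun j _ => ?_
    rw [iterateFrobenius_def, ← pow_mul, mul_comm, pow_mul]
  -- Tr (a ^ q) = Tr a
  have hTrq : ∀ a : F, Tr (a ^ q) = Tr a := by
    intro a
    rw [hTr, hTr]
    have hshift : ∀ j : ℕ, (a ^ q) ^ q ^ j = a ^ q ^ (j + 1) := by
      intro j; rw [← pow_mul, pow_succ']
    have hlast : a ^ q ^ (2 * n) = a ^ q ^ 0 := by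
      rw [pow_zero, pow_one, ← hcard]
      exact FiniteField.pow_card a
    have key := (Finset.sum_range_succ' (fun k => a ^ q ^ k) (2 * n)).symm.trans
      (Finset.sum_range_succ (fun k => a ^ q ^ k) (2 * n))
    simp only [hlast] at key
    have := add_right_cancel key
    calc ∑ j ∈ Finset.range (2 * n), (a ^ q) ^ q ^ j
        = ∑ j ∈ Finset.range (2 * n), a ^ q ^ (j + 1) :=
          Finset.sum_congr rfl fun j _ => hshift j
      _ = ∑ j ∈ Finset.range (2 * n), a ^ q ^ j := this
  -- Tr values are fixed by the q-power map
  have hTrFq : ∀ a : F, (Tr a) ^ q = Tr a := by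
    intro a
    rw [hqdef, ← hTrfrob, ← hqdef, hTrq]
  -- Key lemma: adding d with d^(q^2) = d does not change Tr (· ^ (q+1))
  have hkey : ∀ x d : F, d ^ q ^ 2 = d → Tr ((x + d) ^ (q + 1)) = Tr (x ^ (q + 1)) := by
    intro x d hd
    have hdq2 : (d ^ q) ^ q = d := by
      rw [← pow_mul, ← pow_two]; exact hd
    have hx : (x + d) ^ q = x ^ q + d ^ q := by
      have := hfrob x d 1; simpa using this
    have hexp : (x + d) ^ (q + 1)
        = x ^ (q + 1) + (x ^ q * d + x * d ^ q) + d ^ (q + 1) := by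
      rw [pow_succ, pow_succ, pow_succ, hx]; ring
    rw [hexp, hTradd, hTradd, hTradd]
    -- cross terms cancel
    have hcross : Tr (x * d ^ q) = Tr (x ^ q * d) := by
      have : (x ^ q * d) = (x * d ^ q) ^ q := by
        rw [mul_pow, hdq2]  -- (x*d^q)^q = x^q * (d^q)^q = x^q * d
      rw [this, hTrq]
    -- Tr (d^(q+1)) = 0
    have hdiag : Tr (d ^ (q + 1)) = 0 := by
      have hsw : ∀ j : ℕ, d ^ q ^ (j + 2) = d ^ q ^ j := by
        intro j
        have : q ^ (j + 2) = q ^ 2 * q ^ j := by ring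
        rw [this, pow_mul, hd]
      have hterm : ∀ j : ℕ, d ^ q ^ j * d ^ q ^ (j + 1) = d * d ^ q := by
        intro j
        induction j with
        | zero => simp
        | succ j ih =>
            rw [hsw j, mul_comm]
            exact ih
      have hterm2 : ∀ j : ℕ, (d ^ (q + 1)) ^ q ^ j = d * d ^ q := by
        intro j
        rw [← pow_mul]
        have : (q + 1) * q ^ j = q ^ j + q ^ (j + 1) := by ring
        rw [this, pow_add]
        exact hterm j
      rw [hTr]
      rw [Finset.sum_congr rfl fun j _ => hterm2 j]
      rw [Finset.sum_const, Finset.card_range, nsmul_eq_mul]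
      push_cast
      rw [htwo]
      ring
    rw [hcross, hself, hdiag]
    ring
  -- upgrade to exponent 2^i * (q+1)
  have hkey2 : ∀ x d : F, d ^ q ^ 2 = d →
      Tr ((x + d) ^ (2 ^ i * (q + 1))) = Tr (x ^ (2 ^ i * (q + 1))) := by
    intro x d hd
    have hE : ∀ a : F, a ^ (2 ^ i * (q + 1)) = (a ^ (q + 1)) ^ 2 ^ i := by
      intro a; rw [mul_comm, pow_mul]
    rw [hE, hE, hTrfrob, hTrfrob, hkey x d hd]
  -- injectivity
  rw [Fintype.bijective_iff_injective_and_card]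
  refine ⟨?_, rfl⟩
  intro x y h
  simp only at h
  set E := 2 ^ i * (q + 1) with hE
  -- γ * (x + y) = Tr (x^E) + Tr (y^E)
  have hd : γ * (x + y) = Tr (x ^ E) + Tr (y ^ E) := by
    linear_combination h + (γ * y - Tr (x ^ E)) * htwo
  set c : F := Tr (x ^ E) + Tr (y ^ E) with hc
  have hcq : c ^ q = c := by
    have := hfrob (Tr (x ^ E)) (Tr (y ^ E)) 1
    simp only [pow_one] at this
    rw [hc, this, hTrFq, hTrFq]
  set d : F := x + y with hdd
  have hdγ : d = γ⁻¹ * c := by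
    rw [eq_inv_mul_iff_mul_eq₀ hγ]
    exact hd
  have hdfix : d ^ q ^ 2 = d := by
    have hcc : c ^ q ^ 2 = c := by
      rw [pow_two, pow_mul, hcq, hcq]
    rw [hdγ, mul_pow, inv_pow, hγq2, hcc]
  have hyx : y = x + d := by
    rw [hdd]
    rw [← add_assoc, hself, zero_add]
  have hTreq : Tr (y ^ E) = Tr (x ^ E) := by
    rw [hyx]
    exact hkey2 x d hdfix
  have hc0 : c = 0 := by
    rw [hc, hTreq, hself]
  have hd0 : d = 0 := by rw [hdγ, hc0, mul_zero]
  have : x + y = 0 := by rw [← hdd]; exact hd0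
  calc x = x + (x + y) := by rw [this, add_zero]
    _ = y := by rw [← add_assoc, hself, zero_add]
end

section
/- Let q = 2^t, n, t, i > 0 integers, γ ∈ F_{q^2} nonzero, and f(X) = γX + Tr_{q^{2n}/q}(X^{2^i(q+1)}) over F_{q^{2n}}. For every c ∈ F_{q^2} \ F_2 and every a, b ∈ F_{q^{2n}}, the equation f(X + a) + c·f(X) = b has exactly one solution X ∈ F_{q^{2n}}; i.e., f is perfect c-nonlinear for all c ∈ F_{q^2} \ F_2. -/
/-- `f(X) = γX + Tr_{q^{2n}/q}(X^{2^i(q+1)})` is PcN for all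
`c ∈ F_{q^2} \ F_2`. -/
theorem stmt_3 {F : Type*} [Field F] [Fintype F] (t n i : ℕ)
    (ht : 0 < t) (hn : 0 < n) (hi : 0 < i)
    (hcard : Fintype.card F = (2 ^ t) ^ (2 * n))
    (Tr : F → F) (hTr : ∀ x, Tr x = ∑ j ∈ Finset.range (2 * n), x ^ ((2 ^ t) ^ j))
    (γ : F) (hγ : γ ≠ 0) (hγq2 : γ ^ ((2 ^ t) ^ 2) = γ)
    (f : F → F) (hf : ∀ X, f X = γ * X + Tr (X ^ (2 ^ i * (2 ^ t + 1))))
    (c : F) (hcq2 : c ^ ((2 ^ t) ^ 2) = c) (hc0 : c ≠ 0) (hc1 : c ≠ 1) :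
    ∀ a b : F, ∃! X : F, f (X + a) + c * f X = b := by
  classical
  -- the characteristic is 2
  have hchar2 : ringChar F = 2 := by
    rw [FiniteField.even_card_iff_char_two, hcard]
    have h2 : (2 : ℕ) ∣ (2 ^ t) ^ (2 * n) := dvd_pow (dvd_pow_self 2 ht.ne') (by omega)
    omega
  haveI hP : CharP F 2 := by rw [← hchar2]; exact ringChar.charP F
  haveI : Fact (Nat.Prime 2) := ⟨Nat.prime_two⟩
  -- Frobenius additivity
  have hq2 : ∀ (m : ℕ) (x y : F), (x + y) ^ (2 ^ t) ^ m = x ^ (2 ^ t) ^ m + y ^ (2 ^ t) ^ m := by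
    intro m x y
    rw [← pow_mul]
    exact add_pow_char_pow ..
  have hqadd : ∀ x y : F, (x + y) ^ 2 ^ t = x ^ 2 ^ t + y ^ 2 ^ t := by
    intro x y; simpa using hq2 1 x y
  have hqi : ∀ x y : F, (x + y) ^ 2 ^ i = x ^ 2 ^ i + y ^ 2 ^ i := by
    intro x y; exact add_pow_char_pow ..
  have hpowcard : ∀ x : F, x ^ ((2 ^ t) ^ (2 * n)) = x := by
    intro x; rw [← hcard]; exact FiniteField.pow_card x
  -- sum shift lemma
  have hshift : ∀ a : ℕ → F, a (2 * n) = a 0 →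
      (∑ j ∈ Finset.range (2 * n), a (j + 1)) = ∑ j ∈ Finset.range (2 * n), a j := by
    intro a ha
    have h1 := Finset.sum_range_succ a (2 * n)
    have h2 := Finset.sum_range_succ' a (2 * n)
    rw [h1, ha] at h2
    exact (add_right_cancel h2).symm
  -- Tr is invariant under the q-Frobenius
  have hfrobTr : ∀ x : F, Tr (x ^ 2 ^ t) = Tr x := by
    intro x
    rw [hTr, hTr x]
    calc ∑ j ∈ Finset.range (2 * n), (x ^ 2 ^ t) ^ (2 ^ t) ^ j
        = ∑ j ∈ Finset.range (2 * n), x ^ (2 ^ t) ^ (j + 1) := by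
          refine Finset.sum_congr rfl fun j _ => ?_
          rw [pow_succ', pow_mul]
      _ = ∑ j ∈ Finset.range (2 * n), x ^ (2 ^ t) ^ j := by
          refine hshift (fun j => x ^ (2 ^ t) ^ j) ?_
          show x ^ (2 ^ t) ^ (2 * n) = x ^ (2 ^ t) ^ 0
          rw [pow_zero, pow_one]
          exact hpowcard x
  -- Tr is additive
  have hTr_add : ∀ x y : F, Tr (x + y) = Tr x + Tr y := by
    intro x y
    rw [hTr, hTr, hTr, ← Finset.sum_add_distrib]
    exact Finset.sum_congr rfl fun j _ => hq2 j x y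
  -- Tr takes values in F_q
  have hTr_q : ∀ x : F, (Tr x) ^ 2 ^ t = Tr x := by
    intro x
    have h1 : (Tr x) ^ 2 ^ t = Tr (x ^ 2 ^ t) := by
      rw [hTr x, hTr (x ^ 2 ^ t), ← iterateFrobenius_def (p := 2) (n := t), map_sum]
      refine Finset.sum_congr rfl fun j _ => ?_
      rw [iterateFrobenius_def]
      exact pow_right_comm x _ _
    rw [h1, hfrobTr]
  have hTrq2 : ∀ x : F, (Tr x) ^ (2 ^ t) ^ 2 = Tr x := by
    intro x
    rw [pow_two, pow_mul, hTr_q, hTr_q]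
  -- Tr vanishes on F_q
  have hTr_fq : ∀ z : F, z ^ 2 ^ t = z → Tr z = 0 := by
    intro z hz
    have hj : ∀ j, z ^ (2 ^ t) ^ j = z := by
      intro j
      induction j with
      | zero => simp
      | succ k ih => rw [pow_succ, pow_mul, ih, hz]
    rw [hTr]
    simp only [hj]
    rw [Finset.sum_const, Finset.card_range, mul_smul, two_nsmul, CharTwo.add_self_eq_zero]
  -- Tr (u ^ s) = 0 for u ∈ F_{q^2}
  have hE : ∀ u : F, u ^ (2 ^ t) ^ 2 = u → Tr (u ^ (2 ^ i * (2 ^ t + 1))) = 0 := by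
    intro u hu
    have hU2 : (u ^ 2 ^ i) ^ (2 ^ t) ^ 2 = u ^ 2 ^ i := by
      rw [← pow_mul, mul_comm, pow_mul, hu]
    apply hTr_fq
    rw [pow_mul u (2 ^ i) (2 ^ t + 1), ← pow_mul,
      show (2 ^ t + 1) * 2 ^ t = (2 ^ t) ^ 2 + 2 ^ t by ring, pow_add, hU2, pow_succ]
    ring
  -- key trace identity for u ∈ F_{q^2}
  have hD : ∀ u : F, u ^ (2 ^ t) ^ 2 = u → ∀ x : F,
      Tr ((x + u) ^ (2 ^ i * (2 ^ t + 1))) = Tr (x ^ (2 ^ i * (2 ^ t + 1))) := by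
    intro u hu x
    have hU2 : (u ^ 2 ^ i) ^ (2 ^ t) ^ 2 = u ^ 2 ^ i := by
      rw [← pow_mul, mul_comm, pow_mul, hu]
    have hEs : Tr ((u ^ 2 ^ i) ^ (2 ^ t + 1)) = 0 := by
      rw [← pow_mul]
      exact hE u hu
    rw [pow_mul (x + u) (2 ^ i) (2 ^ t + 1), pow_mul x (2 ^ i) (2 ^ t + 1), hqi]
    set X := x ^ 2 ^ i with hX
    set U := u ^ 2 ^ i with hU
    have hexp : (X + U) ^ (2 ^ t + 1)
        = X ^ (2 ^ t + 1) + ((X * U ^ 2 ^ t) ^ 2 ^ t + X * U ^ 2 ^ t) + U ^ (2 ^ t + 1) := by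
      have h1 : (X + U) ^ 2 ^ t = X ^ 2 ^ t + U ^ 2 ^ t := hqadd X U
      have hUU : (U ^ 2 ^ t) ^ 2 ^ t = U := by
        calc (U ^ 2 ^ t) ^ 2 ^ t = U ^ (2 ^ t * 2 ^ t) := (pow_mul U _ _).symm
          _ = U ^ (2 ^ t) ^ 2 := by rw [pow_two]
          _ = U := hU2
      have h2 : (X * U ^ 2 ^ t) ^ 2 ^ t = X ^ 2 ^ t * U := by
        rw [mul_pow, hUU]
      rw [pow_succ, pow_succ, pow_succ, h1, h2]
      ring
    rw [hexp, hTr_add, hTr_add, hTr_add, hfrobTr, CharTwo.add_self_eq_zero, add_zero, hEs,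
      add_zero]
  intro a b
  -- injectivity of the difference map
  have key : ∀ X₁ X₂ : F, f (X₁ + a) + c * f X₁ = f (X₂ + a) + c * f X₂ → X₁ = X₂ := by
    intro X₁ X₂ h
    rw [hf (X₁ + a), hf X₁, hf (X₂ + a), hf X₂] at h
    have hkey : γ * (1 + c) * (X₁ - X₂)
        = (Tr ((X₂ + a) ^ (2 ^ i * (2 ^ t + 1))) - Tr ((X₁ + a) ^ (2 ^ i * (2 ^ t + 1))))
          + c * (Tr (X₂ ^ (2 ^ i * (2 ^ t + 1))) - Tr (X₁ ^ (2 ^ i * (2 ^ t + 1)))) := by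
      linear_combination h
    have h1c : (1 : F) + c ≠ 0 := by
      intro h0
      apply hc1
      have hc : c = -1 := by linear_combination h0
      rw [hc, CharTwo.neg_eq]
    have hγ1c : γ * (1 + c) ≠ 0 := mul_ne_zero hγ h1c
    have hu2 : (X₁ - X₂) ^ (2 ^ t) ^ 2 = X₁ - X₂ := by
      have e : ((Tr ((X₂ + a) ^ (2 ^ i * (2 ^ t + 1))) - Tr ((X₁ + a) ^ (2 ^ i * (2 ^ t + 1))))
            + c * (Tr (X₂ ^ (2 ^ i * (2 ^ t + 1))) - Tr (X₁ ^ (2 ^ i * (2 ^ t + 1))))) ^ (2 ^ t) ^ 2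
          = (Tr ((X₂ + a) ^ (2 ^ i * (2 ^ t + 1))) - Tr ((X₁ + a) ^ (2 ^ i * (2 ^ t + 1))))
            + c * (Tr (X₂ ^ (2 ^ i * (2 ^ t + 1))) - Tr (X₁ ^ (2 ^ i * (2 ^ t + 1)))) := by
        simp only [CharTwo.sub_eq_add, hq2 2, mul_pow, hTrq2, hcq2]
      have e2 : (γ * (1 + c) * (X₁ - X₂)) ^ (2 ^ t) ^ 2 = γ * (1 + c) * (X₁ - X₂) := by
        rw [hkey]; exact e
      have e3 : γ * (1 + c) * ((X₁ - X₂) ^ (2 ^ t) ^ 2) = γ * (1 + c) * (X₁ - X₂) := by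
        rw [← e2, mul_pow, mul_pow, hγq2, hq2 2, one_pow, hcq2]
      exact mul_left_cancel₀ hγ1c e3
    have hT13 : Tr ((X₁ + a) ^ (2 ^ i * (2 ^ t + 1))) = Tr ((X₂ + a) ^ (2 ^ i * (2 ^ t + 1))) := by
      have e : X₁ + a = (X₂ + a) + (X₁ - X₂) := by ring
      rw [e]
      exact hD (X₁ - X₂) hu2 (X₂ + a)
    have hT24 : Tr (X₁ ^ (2 ^ i * (2 ^ t + 1))) = Tr (X₂ ^ (2 ^ i * (2 ^ t + 1))) := by
      have e : X₁ = X₂ + (X₁ - X₂) := by ring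
      nth_rewrite 1 [e]
      exact hD (X₁ - X₂) hu2 X₂
    have hz : γ * (1 + c) * (X₁ - X₂) = 0 := by
      rw [hkey, hT13, hT24]
      ring
    have hu0 : X₁ - X₂ = 0 := by
      rcases mul_eq_zero.mp hz with h' | h'
      · exact absurd h' hγ1c
      · exact h'
    exact sub_eq_zero.mp hu0
  have hbij : Function.Bijective (fun X : F => f (X + a) + c * f X) :=
    Finite.injective_iff_bijective.mp (fun X₁ X₂ h => key X₁ X₂ h)
  obtain ⟨X, hX⟩ := hbij.2 b
  exact ⟨X, hX, fun y hy => key y X (hy.trans hX.symm)⟩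
end

section
/- Let q = 2^t with gcd(i, t) = 1, n, t, i > 0 integers, γ ∈ F_{q^2} nonzero, and f(X) = γX + Tr_{q^{2n}/q}(X^{2^i(q+1)}) over F_{q^{2n}}. For every c ∈ F_{q^{2n}} \ F_{q^2} and every a, b ∈ F_{q^{2n}}, the equation f(X + a) + c·f(X) = b has at most two solutions X ∈ F_{q^{2n}}; i.e., the c-differential uniformity of f is at most 2. -/
/-!
Write `q = 2 ^ t`, `T = Tr_{q^{2n}/q}`, `E = 2 ^ i (q + 1)` and
`B(x, y) = T((y x^q)^{2^i}) + T((y^q x)^{2^i})`, so that `T((x + y)^E) = T(x^E) + T(y^E) + B(x, y)`.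
The form `B` is additive, takes values in `𝔽_q`, and vanishes as soon as one argument lies in
`𝔽_{q²}`.

If `X₁, X₂` both solve the equation, then `γ (1 + c) (X₁ + X₂) = (1 + c) s + r` with
`s = T(X₁^E) + T(X₂^E)` and `r = B(X₁ + X₂, a)` in `𝔽_q`, so `X₁ + X₂ = γ⁻¹ s + (γ (1 + c))⁻¹ r`
where `γ⁻¹ s ∈ 𝔽_{q²}`. If `r = 0` this forces `s = T((X₁ + X₂)^E) + B(X₁, X₁ + X₂) = 0`, hence
`X₁ = X₂`. In general, applying `B(·, a)` gives `r = μ r^{2^i}` for a `μ` independent of the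
solutions, so two nonzero such `r` differ by a factor in `𝔽_{2^i} ∩ 𝔽_q = 𝔽_2`, as `gcd(i, t) = 1`.
Among three solutions, `B(X₁ + X₂, a) = B(X₁ + X₃, a)` therefore gives `B(X₂ + X₃, a) = 0`.
-/

open Finset

theorem pow_pow_eq_self_of_pow_eq_self {M : Type*} [Monoid M] {x : M} {q : ℕ} (hx : x ^ q = x)
    (j : ℕ) : x ^ q ^ j = x := by
  induction j with
  | zero => rw [pow_zero, pow_one]
  | succ j ih => rw [pow_succ, pow_mul, ih, hx]

theorem eq_one_of_pow_two_pow_eq_self {M : Type*} [GroupWithZero M] {w : M} (hw : w ≠ 0)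
    {i t : ℕ} (hgcd : Nat.gcd i t = 1) (hi : w ^ 2 ^ i = w) (ht : w ^ 2 ^ t = w) : w = 1 := by
  have pow_pred_eq_one {k : ℕ} (hk : w ^ 2 ^ k = w) : w ^ (2 ^ k - 1) = 1 :=
    mul_right_cancel₀ hw (by rw [pow_sub_one_mul (by positivity), hk, one_mul])
  have := pow_gcd_eq_one.mpr ⟨pow_pred_eq_one hi, pow_pred_eq_one ht⟩
  rwa [Nat.pow_sub_one_gcd_pow_sub_one, hgcd, pow_one, pow_one] at this

theorem eq_of_eq_mul_pow_two_pow {K : Type*} [Field K] {μ r s : K} {i t : ℕ}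
    (hgcd : Nat.gcd i t = 1) (hr : r ≠ 0) (hs : s ≠ 0) (hrt : r ^ 2 ^ t = r)
    (hst : s ^ 2 ^ t = s) (hri : r = μ * r ^ 2 ^ i) (hsi : s = μ * s ^ 2 ^ i) : r = s := by
  have hμ : μ ≠ 0 := by
    rintro rfl
    exact hr (by rw [hri, zero_mul])
  refine (div_eq_one_iff_eq hs).mp (eq_one_of_pow_two_pow_eq_self (div_ne_zero hr hs) hgcd ?_ ?_)
  · rw [div_pow, div_eq_div_iff (pow_ne_zero _ hs) hs]
    refine mul_left_cancel₀ hμ ?_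
    linear_combination r * hsi - s * hri
  · rw [div_pow, hrt, hst]

section FrobeniusTrace

variable {R : Type*} [CommRing R]

def frobTrace (q m : ℕ) (x : R) : R := ∑ j ∈ range m, x ^ q ^ j

theorem frobTrace_pow_of_pow_eq_self {q m : ℕ} {x : R} (hx : x ^ q ^ m = x) :
    frobTrace q m (x ^ q) = frobTrace q m x := by
  have hshift := sum_range_succ' (fun j ↦ x ^ q ^ j) m
  rw [sum_range_succ, hx, pow_zero, pow_one] at hshift
  simp only [frobTrace, ← pow_mul, ← pow_succ']
  exact add_right_cancel hshift.symm

theorem frobTrace_mul_of_pow_eq_self {q m : ℕ} {s : R} (hs : s ^ q = s) (x : R) :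
    frobTrace q m (s * x) = s * frobTrace q m x := by
  simp only [frobTrace, mul_sum, mul_pow, pow_pow_eq_self_of_pow_eq_self hs]

theorem frobTrace_of_pow_eq_self {q m : ℕ} {s : R} (hs : s ^ q = s) :
    frobTrace q m s = m * s := by
  simp only [frobTrace, pow_pow_eq_self_of_pow_eq_self hs, sum_const, card_range, nsmul_eq_mul]

theorem frobTrace_pow_mul_succ_eq_zero {q m : ℕ} (hm : (m : R) = 0) {y : R}
    (hy : y ^ q ^ 2 = y) (e : ℕ) : frobTrace q m (y ^ (e * (q + 1))) = 0 := by
  have hfix : (y ^ (q + 1)) ^ q = y ^ (q + 1) := by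
    rw [← pow_mul, add_one_mul, pow_add, ← sq, hy, ← pow_succ']
  rw [pow_mul', frobTrace_of_pow_eq_self (by rw [pow_right_comm, hfix]), hm, zero_mul]

variable {p : ℕ} [ExpChar R p] {t m : ℕ}

theorem frobTrace_add (x y : R) :
    frobTrace (p ^ t) m (x + y) = frobTrace (p ^ t) m x + frobTrace (p ^ t) m y := by
  simp only [frobTrace, ← sum_add_distrib, ← pow_mul, add_pow_expChar_pow]

theorem frobTrace_pow_expChar_pow (k : ℕ) (x : R) :
    frobTrace (p ^ t) m x ^ p ^ k = frobTrace (p ^ t) m (x ^ p ^ k) := by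
  simp only [frobTrace, sum_pow_char_pow, pow_right_comm x]

end FrobeniusTrace

section TracePolar

variable {R : Type*} [CommRing R]

/-- The polar form of `x ↦ frobTrace q m (x ^ (e * (q + 1)))` when `q` and `e` are powers of the
characteristic, see `frobTrace_add_pow`. -/
def tracePolar (q m e : ℕ) (x y : R) : R :=
  frobTrace q m ((y * x ^ q) ^ e) + frobTrace q m ((y ^ q * x) ^ e)

theorem tracePolar_comm (q m e : ℕ) (x y : R) :
    tracePolar q m e x y = tracePolar q m e y x := by
  rw [tracePolar, tracePolar, add_comm, mul_comm y, mul_comm (y ^ q)]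

theorem tracePolar_mul_left {q m e : ℕ} {s : R} (hs : s ^ q = s) (x y : R) :
    tracePolar q m e (s * x) y = s ^ e * tracePolar q m e x y := by
  have hse : (s ^ e) ^ q = s ^ e := by rw [pow_right_comm, hs]
  rw [tracePolar, tracePolar, mul_add, ← frobTrace_mul_of_pow_eq_self hse,
    ← frobTrace_mul_of_pow_eq_self hse, ← mul_pow, ← mul_pow, mul_pow s x, hs]
  congr 2 <;> ring

variable {p : ℕ} [ExpChar R p] {t m i : ℕ}

theorem tracePolar_add_left (x x' y : R) :
    tracePolar (p ^ t) m (p ^ i) (x + x') y =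
      tracePolar (p ^ t) m (p ^ i) x y + tracePolar (p ^ t) m (p ^ i) x' y := by
  simp only [tracePolar, add_pow_expChar_pow, mul_add, frobTrace_add]
  ring

theorem frobTrace_add_pow (x y : R) :
    frobTrace (p ^ t) m ((x + y) ^ (p ^ i * (p ^ t + 1))) =
      frobTrace (p ^ t) m (x ^ (p ^ i * (p ^ t + 1))) +
        frobTrace (p ^ t) m (y ^ (p ^ i * (p ^ t + 1))) + tracePolar (p ^ t) m (p ^ i) x y := by
  have hsucc : (x + y) ^ (p ^ t + 1) =
      x ^ (p ^ t + 1) + y ^ (p ^ t + 1) + (y * x ^ p ^ t + y ^ p ^ t * x) := by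
    rw [pow_succ, add_pow_expChar_pow]
    ring
  simp only [pow_mul', hsucc, add_pow_expChar_pow, frobTrace_add, tracePolar]

end TracePolar

section FiniteField

variable {F : Type*} [Field F] [Fintype F] {t m : ℕ}

theorem charP_two_of_card_eq_two_pow {k : ℕ} (hcard : Fintype.card F = 2 ^ k) : CharP F 2 := by
  have hk : k ≠ 0 := by
    rintro rfl
    exact (Fintype.one_lt_card (α := F)).ne' (by rw [hcard, pow_zero])
  refine ringChar.of_eq (FiniteField.even_card_iff_char_two.mpr ?_)
  rw [hcard, Nat.pow_mod, Nat.mod_self, zero_pow hk, Nat.zero_mod]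

theorem frobTrace_pow_self {p : ℕ} [ExpChar F p] (hcard : Fintype.card F = (p ^ t) ^ m) (x : F) :
    frobTrace (p ^ t) m x ^ p ^ t = frobTrace (p ^ t) m x := by
  rw [frobTrace_pow_expChar_pow, frobTrace_pow_of_pow_eq_self (hcard ▸ FiniteField.pow_card x)]

theorem tracePolar_pow_self {p : ℕ} [ExpChar F p] (hcard : Fintype.card F = (p ^ t) ^ m)
    (e : ℕ) (x y : F) :
    tracePolar (p ^ t) m e x y ^ p ^ t = tracePolar (p ^ t) m e x y := by
  rw [tracePolar, add_pow_expChar_pow, frobTrace_pow_self hcard, frobTrace_pow_self hcard]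

theorem tracePolar_eq_zero_of_pow_sq_eq_self [CharP F 2] (hcard : Fintype.card F = (2 ^ t) ^ m)
    (e : ℕ) (x : F) {y : F} (hy : y ^ (2 ^ t) ^ 2 = y) : tracePolar (2 ^ t) m e x y = 0 := by
  have hconj : y * x ^ 2 ^ t = (y ^ 2 ^ t * x) ^ 2 ^ t := by
    rw [mul_pow, ← pow_mul, ← sq, hy]
  rw [tracePolar, hconj, pow_right_comm,
    frobTrace_pow_of_pow_eq_self (hcard ▸ FiniteField.pow_card _), CharTwo.add_self_eq_zero]

end FiniteField

section TraceMap

variable {F : Type*} [Field F]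

def traceMap (t m i : ℕ) (γ X : F) : F :=
  γ * X + frobTrace (2 ^ t) m (X ^ (2 ^ i * (2 ^ t + 1)))

variable [CharP F 2] {t m i : ℕ} {γ c a b : F}

theorem traceMap_cDiff (X : F) :
    traceMap t m i γ (X + a) + c * traceMap t m i γ X =
      γ * (1 + c) * X + (1 + c) * frobTrace (2 ^ t) m (X ^ (2 ^ i * (2 ^ t + 1))) +
        tracePolar (2 ^ t) m (2 ^ i) X a + traceMap t m i γ a := by
  rw [traceMap, frobTrace_add_pow, traceMap, traceMap]
  ring

theorem traceMap_cDiff_add {X₁ X₂ : F}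
    (h₁ : traceMap t m i γ (X₁ + a) + c * traceMap t m i γ X₁ = b)
    (h₂ : traceMap t m i γ (X₂ + a) + c * traceMap t m i γ X₂ = b) :
    γ * (1 + c) * (X₁ + X₂) =
      (1 + c) * (frobTrace (2 ^ t) m (X₁ ^ (2 ^ i * (2 ^ t + 1))) +
        frobTrace (2 ^ t) m (X₂ ^ (2 ^ i * (2 ^ t + 1)))) +
        tracePolar (2 ^ t) m (2 ^ i) (X₁ + X₂) a := by
  have h := h₁.trans h₂.symm
  rw [traceMap_cDiff, traceMap_cDiff] at h
  rw [tracePolar_add_left]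
  linear_combination (norm := ring_nf) h
  simp [CharTwo.two_eq_zero]

theorem traceMap_cDiff_add_eq (hγ : γ ≠ 0) (hc : c ≠ 1) {X₁ X₂ : F}
    (h₁ : traceMap t m i γ (X₁ + a) + c * traceMap t m i γ X₁ = b)
    (h₂ : traceMap t m i γ (X₂ + a) + c * traceMap t m i γ X₂ = b) :
    X₁ + X₂ = γ⁻¹ * (frobTrace (2 ^ t) m (X₁ ^ (2 ^ i * (2 ^ t + 1))) +
        frobTrace (2 ^ t) m (X₂ ^ (2 ^ i * (2 ^ t + 1)))) +
      (γ * (1 + c))⁻¹ * tracePolar (2 ^ t) m (2 ^ i) (X₁ + X₂) a := by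
  have hc' : 1 + c ≠ 0 := fun h ↦ hc (CharTwo.add_eq_zero.mp h).symm
  field_simp
  linear_combination traceMap_cDiff_add h₁ h₂

variable [Fintype F]

theorem inv_mul_frobTrace_add_pow_sq (hcard : Fintype.card F = (2 ^ t) ^ m)
    (hγq : γ ^ (2 ^ t) ^ 2 = γ) (x y : F) :
    (γ⁻¹ * (frobTrace (2 ^ t) m x + frobTrace (2 ^ t) m y)) ^ (2 ^ t) ^ 2 =
      γ⁻¹ * (frobTrace (2 ^ t) m x + frobTrace (2 ^ t) m y) := by
  have hfix : (frobTrace (2 ^ t) m x + frobTrace (2 ^ t) m y) ^ 2 ^ t =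
      frobTrace (2 ^ t) m x + frobTrace (2 ^ t) m y := by
    rw [add_pow_expChar_pow, frobTrace_pow_self hcard, frobTrace_pow_self hcard]
  rw [mul_pow, inv_pow, hγq, pow_pow_eq_self_of_pow_eq_self hfix]

theorem traceMap_cDiff_eq_of_tracePolar_eq_zero (hcard : Fintype.card F = (2 ^ t) ^ m)
    (hm : (m : F) = 0) (hγ : γ ≠ 0) (hγq : γ ^ (2 ^ t) ^ 2 = γ) (hc : c ≠ 1) {X₁ X₂ : F}
    (h₁ : traceMap t m i γ (X₁ + a) + c * traceMap t m i γ X₁ = b)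
    (h₂ : traceMap t m i γ (X₂ + a) + c * traceMap t m i γ X₂ = b)
    (hr : tracePolar (2 ^ t) m (2 ^ i) (X₁ + X₂) a = 0) : X₁ = X₂ := by
  have hY := traceMap_cDiff_add_eq hγ hc h₁ h₂
  rw [hr, mul_zero, add_zero] at hY
  have hYq := inv_mul_frobTrace_add_pow_sq hcard hγq (X₁ ^ (2 ^ i * (2 ^ t + 1)))
    (X₂ ^ (2 ^ i * (2 ^ t + 1)))
  rw [← hY] at hYq
  -- `X₂ = X₁ + (X₁ + X₂)` with `X₁ + X₂ ∈ 𝔽_{q²}`, where the trace term and the polar form vanish.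
  have hs : frobTrace (2 ^ t) m (X₁ ^ (2 ^ i * (2 ^ t + 1))) +
      frobTrace (2 ^ t) m (X₂ ^ (2 ^ i * (2 ^ t + 1))) = 0 := by
    conv_lhs => rw [← CharTwo.add_cancel_left X₁ X₂, frobTrace_add_pow,
      frobTrace_pow_mul_succ_eq_zero hm hYq, tracePolar_eq_zero_of_pow_sq_eq_self hcard _ _ hYq]
    rw [add_zero, add_zero, CharTwo.add_self_eq_zero]
  rw [hs, mul_zero] at hY
  exact CharTwo.add_eq_zero.mp hY

theorem traceMap_cDiff_tracePolar_eq (hcard : Fintype.card F = (2 ^ t) ^ m) (hγ : γ ≠ 0)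
    (hγq : γ ^ (2 ^ t) ^ 2 = γ) (hc : c ≠ 1) {X₁ X₂ : F}
    (h₁ : traceMap t m i γ (X₁ + a) + c * traceMap t m i γ X₁ = b)
    (h₂ : traceMap t m i γ (X₂ + a) + c * traceMap t m i γ X₂ = b) :
    tracePolar (2 ^ t) m (2 ^ i) (X₁ + X₂) a =
      tracePolar (2 ^ t) m (2 ^ i) (γ * (1 + c))⁻¹ a *
        tracePolar (2 ^ t) m (2 ^ i) (X₁ + X₂) a ^ 2 ^ i := by
  set r := tracePolar (2 ^ t) m (2 ^ i) (X₁ + X₂) a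
  have hr : r ^ 2 ^ t = r := tracePolar_pow_self hcard _ _ _
  have hY₀ := inv_mul_frobTrace_add_pow_sq hcard hγq (X₁ ^ (2 ^ i * (2 ^ t + 1)))
    (X₂ ^ (2 ^ i * (2 ^ t + 1)))
  set Y₀ := γ⁻¹ * (frobTrace (2 ^ t) m (X₁ ^ (2 ^ i * (2 ^ t + 1))) +
    frobTrace (2 ^ t) m (X₂ ^ (2 ^ i * (2 ^ t + 1))))
  calc r = tracePolar (2 ^ t) m (2 ^ i) (Y₀ + (γ * (1 + c))⁻¹ * r) a := by
        rw [← traceMap_cDiff_add_eq hγ hc h₁ h₂]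
    _ = _ := by
      rw [tracePolar_add_left, tracePolar_comm _ _ _ Y₀,
        tracePolar_eq_zero_of_pow_sq_eq_self hcard _ _ hY₀, zero_add, mul_comm _ r,
        tracePolar_mul_left hr, mul_comm]

theorem card_traceMap_cDiff_le_two (hcard : Fintype.card F = (2 ^ t) ^ m) (hm : (m : F) = 0)
    (hγ : γ ≠ 0) (hγq : γ ^ (2 ^ t) ^ 2 = γ) (hc : c ≠ 1) (hgcd : Nat.gcd i t = 1) (a b : F) :
    Nat.card {X : F // traceMap t m i γ (X + a) + c * traceMap t m i γ X = b} ≤ 2 := by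
  classical
  by_contra! h
  rw [Nat.card_eq_fintype_card] at h
  obtain ⟨⟨X₁, h₁⟩, ⟨X₂, h₂⟩, ⟨X₃, h₃⟩, h₁₂, h₁₃, h₂₃⟩ := Fintype.two_lt_card_iff.mp h
  simp only [ne_eq, Subtype.mk.injEq] at h₁₂ h₁₃ h₂₃
  have key := eq_of_eq_mul_pow_two_pow hgcd
    (mt (traceMap_cDiff_eq_of_tracePolar_eq_zero hcard hm hγ hγq hc h₁ h₂) h₁₂)
    (mt (traceMap_cDiff_eq_of_tracePolar_eq_zero hcard hm hγ hγq hc h₁ h₃) h₁₃)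
    (tracePolar_pow_self hcard _ _ _) (tracePolar_pow_self hcard _ _ _)
    (traceMap_cDiff_tracePolar_eq hcard hγ hγq hc h₁ h₂)
    (traceMap_cDiff_tracePolar_eq hcard hγ hγq hc h₁ h₃)
  rw [← CharTwo.add_eq_zero, ← tracePolar_add_left, add_add_add_comm,
    CharTwo.add_self_eq_zero, zero_add] at key
  exact h₂₃ (traceMap_cDiff_eq_of_tracePolar_eq_zero hcard hm hγ hγq hc h₂ h₃ key)

end TraceMap

theorem stmt_4_general {F : Type*} [Field F] [Fintype F] (t n i : ℕ)
    (hgcd : Nat.gcd i t = 1)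
    (hcard : Fintype.card F = (2 ^ t) ^ (2 * n))
    (Tr : F → F) (hTr : ∀ x, Tr x = ∑ j ∈ Finset.range (2 * n), x ^ ((2 ^ t) ^ j))
    (γ : F) (hγ : γ ≠ 0) (hγq2 : γ ^ ((2 ^ t) ^ 2) = γ)
    (f : F → F) (hf : ∀ X, f X = γ * X + Tr (X ^ (2 ^ i * (2 ^ t + 1))))
    (c : F) (hc : c ^ ((2 ^ t) ^ 2) ≠ c) :
    ∀ a b : F, Nat.card {X : F // f (X + a) + c * f X = b} ≤ 2 := by
  have : CharP F 2 := charP_two_of_card_eq_two_pow (hcard.trans (pow_mul 2 t (2 * n)).symm)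
  obtain rfl : Tr = frobTrace (2 ^ t) (2 * n) := funext hTr
  obtain rfl : f = traceMap t (2 * n) i γ := funext hf
  have hm : ((2 * n : ℕ) : F) = 0 := by
    rw [Nat.cast_mul, Nat.cast_two, CharTwo.two_eq_zero, zero_mul]
  have hc₁ : c ≠ 1 := by
    rintro rfl
    exact hc (one_pow _)
  exact card_traceMap_cDiff_le_two hcard hm hγ hγq2 hc₁ hgcd

/-- With `gcd(i,t) = 1`, `f(X) = γX + Tr_{q^{2n}/q}(X^{2^i(q+1)})` has
c-differential uniformity at most `2` for all `c ∈ F_{q^{2n}} \ F_{q^2}`. -/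
theorem stmt_4 {F : Type*} [Field F] [Fintype F] (t n i : ℕ)
    (ht : 0 < t) (hn : 0 < n) (hi : 0 < i) (hgcd : Nat.gcd i t = 1)
    (hcard : Fintype.card F = (2 ^ t) ^ (2 * n))
    (Tr : F → F) (hTr : ∀ x, Tr x = ∑ j ∈ Finset.range (2 * n), x ^ ((2 ^ t) ^ j))
    (γ : F) (hγ : γ ≠ 0) (hγq2 : γ ^ ((2 ^ t) ^ 2) = γ)
    (f : F → F) (hf : ∀ X, f X = γ * X + Tr (X ^ (2 ^ i * (2 ^ t + 1))))
    (c : F) (hc : c ^ ((2 ^ t) ^ 2) ≠ c) :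
    ∀ a b : F, Nat.card {X : F // f (X + a) + c * f X = b} ≤ 2 :=
  stmt_4_general t n i hgcd hcard Tr hTr γ hγ hγq2 f hf c hc
end

section
/- Let q = 2^t, n, t > 0 integers, and γ ∈ F_q nonzero. Then for every B ∈ F_{q^{2n}}, the equation γX + Tr_{q^{2n}/q}(X^{q^2+1}) = B has exactly one solution X ∈ F_{q^{2n}}; in particular g(X) = γX + Tr_{q^{2n}/q}(X^{q^2+1}) is a permutation of F_{q^{2n}}. -/
/-- For `γ ∈ F_q*`, the equation `γX + Tr_{q^{2n}/q}(X^{q^2+1}) = B` has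
exactly one solution for each `B`; in particular `g` is a permutation of `F_{q^{2n}}`. -/
theorem stmt_5 {F : Type*} [Field F] [Fintype F] (t n : ℕ)
    (ht : 0 < t) (hn : 0 < n)
    (hcard : Fintype.card F = (2 ^ t) ^ (2 * n))
    (Tr : F → F) (hTr : ∀ x, Tr x = ∑ j ∈ Finset.range (2 * n), x ^ ((2 ^ t) ^ j))
    (γ : F) (hγ : γ ≠ 0) (hγq : γ ^ (2 ^ t) = γ) :
    (∀ B : F, ∃! X : F, γ * X + Tr (X ^ ((2 ^ t) ^ 2 + 1)) = B) ∧
    Function.Bijective (fun X : F => γ * X + Tr (X ^ ((2 ^ t) ^ 2 + 1))) := by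
  -- characteristic 2
  have h2F : (2 : F) = 0 := by
    have h0 : ((Fintype.card F : ℕ) : F) = 0 := FiniteField.cast_card_eq_zero F
    rw [hcard] at h0
    push_cast at h0
    have h1 : (2 : F) ^ t = 0 :=
      (pow_eq_zero_iff (a := (2:F)^t) (n := 2 * n) (by omega)).mp h0
    exact (pow_eq_zero_iff (a := (2:F)) (n := t) (by omega)).mp h1
  haveI hchar : CharP F 2 := by
    have hd : ringChar F ∣ 2 := ringChar.dvd (by exact_mod_cast h2F)
    rcases (Nat.dvd_prime Nat.prime_two).mp hd with h1 | h2
    · exact absurd h1 (CharP.ringChar_ne_one)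
    · exact ringChar.of_eq h2
  set q : ℕ := 2 ^ t with hqdef
  -- Frobenius is additive
  have hfrob : ∀ (a b : F) (m : ℕ), (a + b) ^ q ^ m = a ^ q ^ m + b ^ q ^ m := by
    intro a b m
    have hq : q ^ m = 2 ^ (t * m) := by rw [hqdef]; exact (pow_mul 2 t m).symm
    rw [hq]
    exact add_pow_char_pow (R := F) (p := 2) a b (t * m)
  -- x ^ (q ^ (2n)) = x
  have hxcard : ∀ x : F, x ^ q ^ (2 * n) = x := by
    intro x
    rw [← hcard]
    exact FiniteField.pow_card x
  -- shifted sum equals Tr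
  have hshift : ∀ x : F, ∑ j ∈ Finset.range (2 * n), x ^ q ^ (j + 1) = Tr x := by
    intro x
    rw [hTr]
    have h1 := Finset.sum_range_succ' (fun j => x ^ q ^ j) (2 * n)
    have h2 := Finset.sum_range_succ (fun j => x ^ q ^ j) (2 * n)
    have h3 : x ^ q ^ (2 * n) = x ^ q ^ 0 := by rw [hxcard, pow_zero, pow_one]
    have h4 := h1.symm.trans h2
    simp only [h3] at h4
    exact add_right_cancel h4
  -- Tr (x ^ q) = Tr x
  have hA : ∀ x : F, Tr (x ^ q) = Tr x := by
    intro x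
    rw [hTr]
    have h : ∀ j ∈ Finset.range (2 * n), (x ^ q) ^ q ^ j = x ^ q ^ (j + 1) := by
      intro j _
      rw [← pow_mul, ← pow_succ']
    rw [Finset.sum_congr rfl h]
    exact hshift x
  -- (Tr x) ^ q = Tr x
  have hTrq : ∀ x : F, (Tr x) ^ q = Tr x := by
    intro x
    have hmap : (Tr x) ^ q = ∑ j ∈ Finset.range (2 * n), (x ^ q ^ j) ^ q := by
      rw [hTr]
      simpa only [iterateFrobenius_def, hqdef] using
        map_sum (iterateFrobenius F 2 t) (fun j => x ^ q ^ j) (Finset.range (2 * n))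
    rw [hmap]
    have h : ∀ j ∈ Finset.range (2 * n), (x ^ q ^ j) ^ q = x ^ q ^ (j + 1) := by
      intro j _
      rw [← pow_mul, mul_comm, ← pow_succ']
    rw [Finset.sum_congr rfl h]
    exact hshift x
  -- fixed points
  have hfix : ∀ (s : F) (m : ℕ), s ^ q = s → s ^ q ^ m = s := by
    intro s m hs
    induction m with
    | zero => simp
    | succ k ih => rw [pow_succ, pow_mul, ih, hs]
  -- Tr is additive
  have hadd : ∀ a b : F, Tr (a + b) = Tr a + Tr b := by
    intro a b
    rw [hTr, hTr, hTr, ← Finset.sum_add_distrib]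
    exact Finset.sum_congr rfl fun j _ => hfrob a b j
  -- Tr is F_q-linear
  have hlin : ∀ s x : F, s ^ q = s → Tr (s * x) = s * Tr x := by
    intro s x hs
    rw [hTr, hTr, Finset.mul_sum]
    exact Finset.sum_congr rfl fun j _ => by rw [mul_pow, hfix s j hs]
  -- Tr vanishes on F_q
  have hzero : ∀ s : F, s ^ q = s → Tr s = 0 := by
    intro s hs
    rw [hTr]
    rw [Finset.sum_congr rfl fun j _ => hfix s j hs, Finset.sum_const, Finset.card_range,
      mul_smul, two_smul, CharTwo.add_self_eq_zero]
  have hγinv : γ⁻¹ ^ q = γ⁻¹ := by rw [inv_pow, hγq]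
  have hγ2 : (γ⁻¹ ^ 2) ^ q = γ⁻¹ ^ 2 := by
    rw [← pow_mul, mul_comm, pow_mul, hγinv]
  -- main statement per B
  have main : ∀ B : F, ∃! X : F, γ * X + Tr (X ^ (q ^ 2 + 1)) = B := by
    intro B
    have hL : ∀ s : F, s ^ q = s →
        Tr (((B + s) * γ⁻¹) ^ (q ^ 2 + 1)) = γ⁻¹ ^ 2 * Tr (B ^ (q ^ 2 + 1)) := by
      intro s hs
      have hs2 : (s ^ 2) ^ q = s ^ 2 := by rw [← pow_mul, mul_comm, pow_mul, hs]
      have hsQ : s ^ q ^ 2 = s := hfix s 2 hs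
      have hγQ : γ⁻¹ ^ q ^ 2 = γ⁻¹ := hfix γ⁻¹ 2 hγinv
      have hBQ : Tr (B ^ q ^ 2) = Tr B := by
        rw [pow_two, pow_mul, hA, hA]
      have hexp : ((B + s) * γ⁻¹) ^ (q ^ 2 + 1)
          = γ⁻¹ ^ 2 * (B ^ (q ^ 2 + 1) + (s * (B ^ q ^ 2 + B) + s ^ 2)) := by
        rw [mul_pow, pow_succ (B + s) (q ^ 2), pow_succ γ⁻¹ (q ^ 2), hfrob B s 2, hsQ, hγQ,
          pow_succ B (q ^ 2)]
        ring
      rw [hexp, hlin _ _ hγ2, hadd, hadd, hlin _ _ hs, hadd, hBQ,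
        CharTwo.add_self_eq_zero, mul_zero, hzero _ hs2, add_zero, add_zero]
    set c : F := γ⁻¹ ^ 2 * Tr (B ^ (q ^ 2 + 1)) with hcdef
    have hc : c ^ q = c := by rw [hcdef, mul_pow, hγ2, hTrq]
    refine ⟨(B + c) * γ⁻¹, ?_, ?_⟩
    · show γ * ((B + c) * γ⁻¹) + Tr (((B + c) * γ⁻¹) ^ (q ^ 2 + 1)) = B
      have h1 : γ * ((B + c) * γ⁻¹) = B + c := by
        rw [mul_comm γ, mul_assoc, inv_mul_cancel₀ hγ, mul_one]
      rw [h1, hL c hc, add_assoc, CharTwo.add_self_eq_zero, add_zero]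
    · intro X hX0
      have hX : γ * X + Tr (X ^ (q ^ 2 + 1)) = B := hX0
      have hs : (Tr (X ^ (q ^ 2 + 1))) ^ q = Tr (X ^ (q ^ 2 + 1)) := hTrq _
      have h3 : γ * X = B + Tr (X ^ (q ^ 2 + 1)) := by
        have h4 : γ * X + Tr (X ^ (q ^ 2 + 1)) + Tr (X ^ (q ^ 2 + 1))
            = B + Tr (X ^ (q ^ 2 + 1)) := by rw [hX]
        rwa [add_assoc, CharTwo.add_self_eq_zero, add_zero] at h4
      have hXeq : X = (B + Tr (X ^ (q ^ 2 + 1))) * γ⁻¹ := by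
        rw [← h3, mul_comm γ X, mul_assoc, mul_inv_cancel₀ hγ, mul_one]
      have hsc : Tr (X ^ (q ^ 2 + 1)) = c := by
        have h5 := hL _ hs
        rw [← hXeq] at h5
        exact h5
      rw [hXeq, hsc]
  exact ⟨main, (Function.bijective_iff_existsUnique _).mpr main⟩
end

section
/- Let q = 2^t, n, t > 0 integers, γ ∈ F_q nonzero, c ∈ F_q \ F_2, a ∈ F_{q^{2n}} \ F_q, and b ∈ F_{q^{2n}}. Set C = 1/(1+c) and B = C(b + γa + Tr_{q^{2n}/q}(a^{q^2+1})). Then the unique solution X ∈ F_{q^{2n}} of g(X+a) + c·g(X) = b, where g(X) = γX + Tr_{q^{2n}/q}(X^{q^2+1}), is given by X = (u + B)/γ with u = γ^{-2}·Tr_{q^{2n}/q}(B^{q^2+1}) + C·γ^{-1}·Tr_{q^{2n}/q}((B^{q^4} + B)a^{q^2}). -/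
/-- explicit formula for the unique solution of `g(X+a) + c·g(X) = b`
when `c ∈ F_q \ F_2` and `a ∈ F_{q^{2n}} \ F_q`. -/
theorem stmt_7 {F : Type*} [Field F] [Fintype F] (t n : ℕ)
    (ht : 0 < t) (hn : 0 < n)
    (hcard : Fintype.card F = (2 ^ t) ^ (2 * n))
    (Tr : F → F) (hTr : ∀ x, Tr x = ∑ j ∈ Finset.range (2 * n), x ^ ((2 ^ t) ^ j))
    (γ : F) (hγ : γ ≠ 0) (hγq : γ ^ (2 ^ t) = γ)
    (g : F → F) (hg : ∀ X, g X = γ * X + Tr (X ^ ((2 ^ t) ^ 2 + 1)))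
    (c : F) (hcq : c ^ (2 ^ t) = c) (hc0 : c ≠ 0) (hc1 : c ≠ 1)
    (a : F) (ha : a ^ (2 ^ t) ≠ a) (b : F)
    (C B u : F)
    (hC : C = (1 + c)⁻¹)
    (hB : B = C * (b + γ * a + Tr (a ^ ((2 ^ t) ^ 2 + 1))))
    (hu : u = (γ ^ 2)⁻¹ * Tr (B ^ ((2 ^ t) ^ 2 + 1)) +
          C * γ⁻¹ * Tr ((B ^ ((2 ^ t) ^ 4) + B) * a ^ ((2 ^ t) ^ 2))) :
    ∀ X : F, g (X + a) + c * g X = b ↔ X = (u + B) * γ⁻¹ := by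
  classical
  set q := 2 ^ t with hqdef
  -- characteristic 2
  have hchar : CharP F 2 := by
    haveI : CharP F (ringChar F) := ringChar.charP F
    have hprime : (ringChar F).Prime := CharP.char_is_prime F (ringChar F)
    have hdvd : ringChar F ∣ 2 ^ (t * (2 * n)) := by
      have h1 : ((Fintype.card F : ℕ) : F) = 0 := FiniteField.cast_card_eq_zero F
      have h2 : Fintype.card F = 2 ^ (t * (2 * n)) := by
        rw [hcard, hqdef]; exact (pow_mul 2 t (2 * n)).symm
      rw [h2] at h1
      exact (CharP.cast_eq_zero_iff F (ringChar F) _).mp h1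
    have := (Nat.prime_dvd_prime_iff_eq hprime Nat.prime_two).mp
      (hprime.dvd_of_dvd_pow hdvd)
    rw [← this]; exact ringChar.charP F
  haveI := hchar
  haveI : ExpChar F 2 := .prime Nat.prime_two
  have char2 : ∀ x : F, x + x = 0 := fun x => CharTwo.add_self_eq_zero x
  have he : (1 : F) + c ≠ 0 := by
    intro h
    apply hc1
    have : c = -1 := by linear_combination h
    rw [this, CharTwo.neg_eq]
  have heC : (1 + c) * C = 1 := by rw [hC]; exact mul_inv_cancel₀ he
  -- Frobenius facts
  have frob_add : ∀ (k : ℕ) (x y : F), (x + y) ^ q ^ k = x ^ q ^ k + y ^ q ^ k := by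
    intro k x y
    have hq : q ^ k = 2 ^ (t * k) := by rw [hqdef]; exact (pow_mul 2 t k).symm
    rw [hq]
    exact add_pow_expChar_pow x y 2 (t * k)
  have frob_add1 : ∀ x y : F, (x + y) ^ q = x ^ q + y ^ q := by
    intro x y
    have := frob_add 1 x y
    simpa using this
  have pow_card : ∀ x : F, x ^ q ^ (2 * n) = x := by
    intro x; rw [← hcard]; exact FiniteField.pow_card x
  have fixpow : ∀ l : F, l ^ q = l → ∀ j, l ^ q ^ j = l := by
    intro l hl j
    induction j with
    | zero => simp
    | succ j ih => rw [pow_succ, pow_mul, ih, hl]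
  have fixmul : ∀ x y : F, x ^ q = x → y ^ q = y → (x * y) ^ q = x * y := by
    intro x y hx hy; rw [mul_pow, hx, hy]
  have fixinv : ∀ x : F, x ^ q = x → (x⁻¹) ^ q = x⁻¹ := by
    intro x hx; rw [inv_pow, hx]
  have hCfix : C ^ q = C := by
    rw [hC, inv_pow, frob_add1, one_pow, hcq]
  have hγ2fix : (γ ^ 2) ^ q = γ ^ 2 := by
    rw [← pow_mul, mul_comm, pow_mul, hγq]
  -- Trace lemmas
  have TrAdd : ∀ x y : F, Tr (x + y) = Tr x + Tr y := by
    intro x y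
    rw [hTr, hTr, hTr, ← Finset.sum_add_distrib]
    exact Finset.sum_congr rfl fun j _ => frob_add j x y
  have TrSmul : ∀ l x : F, l ^ q = l → Tr (l * x) = l * Tr x := by
    intro l x hl
    rw [hTr, hTr, Finset.mul_sum]
    exact Finset.sum_congr rfl fun j _ => by rw [mul_pow, fixpow l hl j]
  have shift_sum : ∀ x : F,
      (∑ j ∈ Finset.range (2 * n), x ^ q ^ (j + 1)) =
        ∑ j ∈ Finset.range (2 * n), x ^ q ^ j := by
    intro x
    have h1 := Finset.sum_range_succ' (fun j => x ^ q ^ j) (2 * n)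
    have h2 := Finset.sum_range_succ (fun j => x ^ q ^ j) (2 * n)
    rw [h2] at h1
    simp only [pow_zero, pow_one] at h1
    rw [pow_card x] at h1
    exact (add_right_cancel h1).symm
  have TrShift : ∀ x : F, Tr (x ^ q) = Tr x := by
    intro x
    rw [hTr, hTr, ← shift_sum x]
    refine Finset.sum_congr rfl fun j _ => ?_
    rw [← pow_mul, ← pow_succ']
  have TrShift2 : ∀ x : F, Tr (x ^ q ^ 2) = Tr x := by
    intro x
    have h : x ^ q ^ 2 = (x ^ q) ^ q := by
      rw [show (q : ℕ) ^ 2 = q * q by ring, pow_mul]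
    rw [h, TrShift, TrShift]
  have TrPow : ∀ x : F, (Tr x) ^ q = Tr x := by
    intro x
    rw [hTr]
    have hhom : ∀ (s : Finset ℕ) (f : ℕ → F), (∑ j ∈ s, f j) ^ q = ∑ j ∈ s, f j ^ q := by
      intro s f
      induction s using Finset.cons_induction with
      | empty => simp [zero_pow, pow_ne_zero, hqdef]
      | cons i s hi ih => rw [Finset.sum_cons, Finset.sum_cons, frob_add1, ih]
    rw [hhom]
    rw [← shift_sum x]
    refine Finset.sum_congr rfl fun j _ => ?_
    rw [← pow_mul, ← pow_succ]
  have TrConst : ∀ l : F, l ^ q = l → Tr l = 0 := by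
    intro l hl
    rw [hTr, Finset.sum_congr rfl fun j _ => fixpow l hl j, Finset.sum_const,
      Finset.card_range, nsmul_eq_mul]
    have h2 : ((2 * n : ℕ) : F) = 0 := by
      rw [Nat.cast_mul]
      have : ((2 : ℕ) : F) = 0 := by exact_mod_cast CharP.cast_eq_zero F 2
      rw [this, zero_mul]
    rw [h2, zero_mul]
  -- u is fixed by Frobenius
  have hufix : u ^ q = u := by
    rw [hu, frob_add1, mul_pow, mul_pow, mul_pow, fixinv _ hγ2fix, TrPow, hCfix,
      fixinv _ hγq, TrPow]
  -- core substitution computation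
  have hBsub : ∀ s : F, s ^ q = s →
      Tr (((s + B) * γ⁻¹) ^ (q ^ 2 + 1)) +
        C * Tr (a * ((s + B) * γ⁻¹) ^ q ^ 2 + a ^ q ^ 2 * ((s + B) * γ⁻¹)) = u := by
    intro s hs
    have hγ2 : γ ^ q ^ 2 = γ := fixpow γ hγq 2
    have hs2 : s ^ q ^ 2 = s := fixpow s hs 2
    have step1 : ((s + B) * γ⁻¹) ^ q ^ 2 = (s + B ^ q ^ 2) * γ⁻¹ := by
      rw [mul_pow, frob_add 2, hs2, inv_pow, hγ2]
    have hγγ : (γ ^ 2)⁻¹ = γ⁻¹ * γ⁻¹ := by rw [sq, mul_inv]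
    have step2 : ((s + B) * γ⁻¹) ^ (q ^ 2 + 1) =
        (γ ^ 2)⁻¹ * (s * s) + ((γ ^ 2)⁻¹ * s) * (B ^ q ^ 2 + B) +
          (γ ^ 2)⁻¹ * (B ^ q ^ 2 * B) := by
      rw [pow_succ, step1, hγγ]; ring
    have fix1 : ((γ ^ 2)⁻¹ * (s * s)) ^ q = (γ ^ 2)⁻¹ * (s * s) :=
      fixmul _ _ (fixinv _ hγ2fix) (fixmul _ _ hs hs)
    have fix2 : ((γ ^ 2)⁻¹ * s) ^ q = (γ ^ 2)⁻¹ * s :=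
      fixmul _ _ (fixinv _ hγ2fix) hs
    have TrB2 : Tr (B ^ q ^ 2 + B) = 0 := by
      rw [TrAdd, TrShift2, char2]
    have TrX2 : Tr (((s + B) * γ⁻¹) ^ (q ^ 2 + 1)) = (γ ^ 2)⁻¹ * Tr (B ^ (q ^ 2 + 1)) := by
      rw [step2, TrAdd, TrAdd, TrConst _ fix1, TrSmul _ _ fix2, TrB2, mul_zero,
        TrSmul _ _ (fixinv _ hγ2fix)]
      rw [show B ^ q ^ 2 * B = B ^ (q ^ 2 + 1) from (pow_succ B (q ^ 2)).symm]
      ring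
    have step3 : a * ((s + B) * γ⁻¹) ^ q ^ 2 + a ^ q ^ 2 * ((s + B) * γ⁻¹) =
        (γ⁻¹ * s) * (a + a ^ q ^ 2) + γ⁻¹ * (a * B ^ q ^ 2 + a ^ q ^ 2 * B) := by
      rw [step1]; ring
    have h4 : Tr (a * B ^ q ^ 2) = Tr (a ^ q ^ 2 * B ^ q ^ 4) := by
      have hq4 : q ^ 2 * q ^ 2 = q ^ 4 := by ring
      have hexp : (a * B ^ q ^ 2) ^ q ^ 2 = a ^ q ^ 2 * B ^ q ^ 4 := by
        rw [mul_pow, ← pow_mul B (q ^ 2) (q ^ 2), hq4]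
      rw [← hexp, TrShift2]
    have TrCross : Tr (a * ((s + B) * γ⁻¹) ^ q ^ 2 + a ^ q ^ 2 * ((s + B) * γ⁻¹)) =
        γ⁻¹ * Tr ((B ^ q ^ 4 + B) * a ^ q ^ 2) := by
      rw [step3, TrAdd, TrSmul _ _ (fixmul _ _ (fixinv _ hγq) hs),
        TrSmul _ _ (fixinv _ hγq)]
      have haa : Tr (a + a ^ q ^ 2) = 0 := by
        rw [TrAdd, TrShift2, char2]
      rw [haa, mul_zero, zero_add, TrAdd, h4, ← TrAdd]
      rw [show a ^ q ^ 2 * B ^ q ^ 4 + a ^ q ^ 2 * B = (B ^ q ^ 4 + B) * a ^ q ^ 2 by ring]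
    rw [TrX2, TrCross, hu]; ring
  -- R X is fixed by Frobenius
  have hRfix : ∀ X : F,
      (Tr (X ^ (q ^ 2 + 1)) + C * Tr (a * X ^ q ^ 2 + a ^ q ^ 2 * X)) ^ q =
        Tr (X ^ (q ^ 2 + 1)) + C * Tr (a * X ^ q ^ 2 + a ^ q ^ 2 * X) := by
    intro X
    rw [frob_add1, mul_pow, TrPow, hCfix, TrPow]
  -- reduction of the equation
  have keyIff : ∀ X : F, (g (X + a) + c * g X = b) ↔
      γ * X + (Tr (X ^ (q ^ 2 + 1)) + C * Tr (a * X ^ q ^ 2 + a ^ q ^ 2 * X)) = B := by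
    intro X
    have expand : (X + a) ^ (q ^ 2 + 1) =
        X ^ (q ^ 2 + 1) + (a * X ^ q ^ 2 + a ^ q ^ 2 * X) + a ^ (q ^ 2 + 1) := by
      have e1 : ∀ z : F, z ^ (q ^ 2 + 1) = z ^ q ^ 2 * z := fun z => pow_succ z (q ^ 2)
      rw [e1, e1, e1, frob_add 2 X a]
      ring
    have step : g (X + a) + c * g X + b =
        (1 + c) * ((γ * X + (Tr (X ^ (q ^ 2 + 1)) +
          C * Tr (a * X ^ q ^ 2 + a ^ q ^ 2 * X))) + B) := by
      rw [hg, hg, expand, TrAdd, TrAdd, hB, hC]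
      field_simp
      ring
    constructor
    · intro h
      have h0 : (1 + c) * ((γ * X + (Tr (X ^ (q ^ 2 + 1)) +
          C * Tr (a * X ^ q ^ 2 + a ^ q ^ 2 * X))) + B) = 0 := by
        rw [← step, h]; exact char2 b
      have h1 := (mul_eq_zero.mp h0).resolve_left he
      linear_combination h1 - char2 B
    · intro h
      have h0 : g (X + a) + c * g X + b = 0 := by
        rw [step, h, char2 B, mul_zero]
      linear_combination h0 - char2 b
  -- conclusion
  intro X
  rw [keyIff X]
  constructor
  · intro h
    have hsfix := hRfix X
    set s := Tr (X ^ (q ^ 2 + 1)) + C * Tr (a * X ^ q ^ 2 + a ^ q ^ 2 * X) with hsdef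
    have hXeq : X = (s + B) * γ⁻¹ := by
      field_simp
      linear_combination h - char2 s
    have hsu : s = u := by
      calc s = Tr (((s + B) * γ⁻¹) ^ (q ^ 2 + 1)) +
          C * Tr (a * ((s + B) * γ⁻¹) ^ q ^ 2 + a ^ q ^ 2 * ((s + B) * γ⁻¹)) := by
            rw [← hXeq]
        _ = u := hBsub s hsfix
    rw [hXeq, hsu]
  · intro h
    subst h
    rw [hBsub u hufix]
    have h1 : γ * ((u + B) * γ⁻¹) = u + B := by
      field_simp
    linear_combination h1 + char2 u
end

section
/- Let q = 2^t, n even, t, i > 0 integers, and γ ∈ F_{q^2} nonzero. Then h(X) = γX + Tr_{q^{2n}/q}(X^{2^i(q^2+1)}) is a permutation of F_{q^{2n}}. -/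
/-- for `n` even, `h(X) = γX + Tr_{q^{2n}/q}(X^{2^i(q^2+1)})` with
`γ ∈ F_{q^2}*` is a permutation of `F_{q^{2n}}`. -/
theorem stmt_8 {F : Type*} [Field F] [Fintype F] (t n i : ℕ)
    (ht : 0 < t) (hn : 0 < n) (hi : 0 < i) (hneven : Even n)
    (hcard : Fintype.card F = (2 ^ t) ^ (2 * n))
    (Tr : F → F) (hTr : ∀ x, Tr x = ∑ j ∈ Finset.range (2 * n), x ^ ((2 ^ t) ^ j))
    (γ : F) (hγ : γ ≠ 0) (hγq2 : γ ^ ((2 ^ t) ^ 2) = γ) :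
    Function.Bijective (fun X : F => γ * X + Tr (X ^ (2 ^ i * ((2 ^ t) ^ 2 + 1)))) := by
  classical
  -- characteristic 2
  haveI hp2 : CharP F 2 := by
    haveI := ringChar.charP F
    obtain ⟨m, hprime, hc⟩ := FiniteField.card F (ringChar F)
    have hdvd : ringChar F ∣ 2 ^ (t * (2 * n)) := by
      have h1 : ringChar F ∣ Fintype.card F := by
        rw [hc]; exact dvd_pow_self _ (by positivity)
      rwa [hcard, ← pow_mul] at h1
    have : ringChar F = 2 := by
      have h2 := hprime.dvd_of_dvd_pow hdvd
      exact (Nat.prime_dvd_prime_iff_eq hprime Nat.prime_two).mp h2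
    rwa [this] at ‹CharP F (ringChar F)›
  haveI : Fact (Nat.Prime 2) := ⟨Nat.prime_two⟩
  -- basic trace lemmas
  have hTr_shift : ∀ y : F, Tr (y ^ 2 ^ t) = Tr y := by
    intro y
    have hyc : y ^ (2 ^ t) ^ (2 * n) = y := by rw [← hcard]; exact FiniteField.pow_card y
    have h2 := Finset.sum_range_succ' (fun j => y ^ (2 ^ t) ^ j) (2 * n)
    have h3 := Finset.sum_range_succ (fun j => y ^ (2 ^ t) ^ j) (2 * n)
    simp only [pow_zero, pow_one] at h2 h3
    rw [h3, hyc] at h2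
    have h4 : ∑ j ∈ Finset.range (2 * n), y ^ (2 ^ t) ^ j
        = ∑ j ∈ Finset.range (2 * n), y ^ (2 ^ t) ^ (j + 1) := add_right_cancel h2
    rw [hTr, hTr, h4]
    refine Finset.sum_congr rfl fun j _ => ?_
    rw [← pow_mul, ← pow_succ']
  have hTr_frob : ∀ (k : ℕ) (y : F), Tr (y ^ 2 ^ k) = Tr y ^ 2 ^ k := by
    intro k y
    rw [hTr, hTr, sum_pow_char_pow]
    exact Finset.sum_congr rfl fun j _ => pow_right_comm y _ _
  have hTr_q : ∀ y : F, Tr y ^ 2 ^ t = Tr y := fun y => by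
    rw [← hTr_frob, hTr_shift]
  have hTr_q2 : ∀ y : F, Tr (y ^ (2 ^ t) ^ 2) = Tr y := by
    intro y
    have : y ^ (2 ^ t) ^ 2 = (y ^ 2 ^ t) ^ 2 ^ t := by rw [sq, pow_mul]
    rw [this, hTr_shift, hTr_shift]
  have hTr_add : ∀ x y : F, Tr (x + y) = Tr x + Tr y := by
    intro x y
    rw [hTr, hTr, hTr, ← Finset.sum_add_distrib]
    refine Finset.sum_congr rfl fun j _ => ?_
    have hpow : (2 ^ t) ^ j = 2 ^ (t * j) := by rw [pow_mul]
    rw [hpow]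
    exact add_pow_char_pow x y 2 (t * j)
  -- elements fixed by q^2 have trace zero (n even)
  have hTr_fix : ∀ u : F, u ^ (2 ^ t) ^ 2 = u → Tr u = 0 := by
    intro u hu
    have heven : ∀ k, u ^ (2 ^ t) ^ (2 * k) = u := by
      intro k
      induction k with
      | zero => simp
      | succ k ih =>
        have h1 : (2 ^ t : ℕ) ^ (2 * (k + 1)) = (2 ^ t) ^ (2 * k) * (2 ^ t) ^ 2 := by
          rw [← pow_add]; ring_nf
        rw [h1, pow_mul, ih, hu]
    have hsum : ∀ k, ∑ j ∈ Finset.range (2 * k), u ^ (2 ^ t) ^ j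
        = k • (u + u ^ 2 ^ t) := by
      intro k
      induction k with
      | zero => simp
      | succ k ih =>
        have h2 : 2 * (k + 1) = (2 * k + 1) + 1 := by ring
        rw [h2, Finset.sum_range_succ, Finset.sum_range_succ, ih, heven k]
        have h3 : u ^ (2 ^ t) ^ (2 * k + 1) = u ^ 2 ^ t := by
          rw [pow_succ, pow_mul, heven k]
        rw [h3, succ_nsmul]
        ring
    have hnF : (n : F) = 0 :=
      (CharP.cast_eq_zero_iff F 2 n).mpr hneven.two_dvd
    rw [hTr, hsum n, nsmul_eq_mul, hnF, zero_mul]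
  -- key invariance lemma
  have key : ∀ x c : F, c ^ (2 ^ t) ^ 2 = c →
      Tr ((x + c) ^ (2 ^ i * ((2 ^ t) ^ 2 + 1))) = Tr (x ^ (2 ^ i * ((2 ^ t) ^ 2 + 1))) := by
    intro x c hc
    have hexp : ∀ z : F, z ^ (2 ^ i * ((2 ^ t) ^ 2 + 1)) = (z ^ (2 ^ t) ^ 2 * z) ^ 2 ^ i := by
      intro z
      rw [mul_comm (2 ^ i), pow_mul, pow_succ]
    rw [hexp, hexp]
    have hxc : (x + c) ^ (2 ^ t) ^ 2 = x ^ (2 ^ t) ^ 2 + c := by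
      have hpow : (2 ^ t : ℕ) ^ 2 = 2 ^ (t * 2) := by rw [pow_mul]
      rw [hpow] at hc ⊢
      rw [add_pow_char_pow, hc]
    rw [hxc]
    have hexpand : (x ^ (2 ^ t) ^ 2 + c) * (x + c)
        = x ^ (2 ^ t) ^ 2 * x + (x ^ (2 ^ t) ^ 2 * c + (c * x + c * c)) := by ring
    rw [hexpand, add_pow_char_pow, add_pow_char_pow, add_pow_char_pow,
      hTr_add, hTr_add, hTr_add]
    have hA : Tr ((x ^ (2 ^ t) ^ 2 * c) ^ 2 ^ i) = Tr ((c * x) ^ 2 ^ i) := by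
      rw [hTr_frob, hTr_frob]
      congr 1
      have h5 : x ^ (2 ^ t) ^ 2 * c = (x * c) ^ (2 ^ t) ^ 2 := by
        rw [mul_pow, hc]
      rw [h5, hTr_q2, mul_comm]
    have hB : Tr ((c * c) ^ 2 ^ i) = 0 := by
      apply hTr_fix
      rw [pow_right_comm, mul_pow, hc]
    rw [hA, hB, add_zero, CharTwo.add_self_eq_zero, add_zero]
  -- injectivity
  rw [← Finite.injective_iff_bijective]
  intro x1 x2 heq
  simp only at heq
  set E := 2 ^ i * ((2 ^ t) ^ 2 + 1) with hE
  set d := Tr (x1 ^ E) + Tr (x2 ^ E) with hd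
  have hd2 : d ^ (2 ^ t) ^ 2 = d := by
    have h1 : d ^ 2 ^ t = d := by
      rw [hd, add_pow_char_pow, hTr_q, hTr_q]
    rw [sq, pow_mul, h1, h1]
  have hγx : γ * x1 = γ * x2 + d := by
    calc γ * x1 = γ * x1 + (Tr (x1 ^ E) + Tr (x1 ^ E)) := by
          rw [CharTwo.add_self_eq_zero, add_zero]
      _ = (γ * x1 + Tr (x1 ^ E)) + Tr (x1 ^ E) := by ring
      _ = (γ * x2 + Tr (x2 ^ E)) + Tr (x1 ^ E) := by rw [heq]
      _ = γ * x2 + d := by rw [hd]; ring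
  have hx1 : x1 = x2 + γ⁻¹ * d := by
    have : γ * x1 = γ * (x2 + γ⁻¹ * d) := by
      rw [hγx, mul_add, ← mul_assoc, mul_inv_cancel₀ hγ, one_mul]
    exact mul_left_cancel₀ hγ this
  have hcfix : (γ⁻¹ * d) ^ (2 ^ t) ^ 2 = γ⁻¹ * d := by
    rw [mul_pow, hd2, inv_pow, hγq2]
  have hTr_eq : Tr (x1 ^ E) = Tr (x2 ^ E) := by
    rw [hx1]
    exact key x2 _ hcfix
  have hd0 : d = 0 := by rw [hd, hTr_eq, CharTwo.add_self_eq_zero]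
  rw [hx1, hd0, mul_zero, add_zero]
end

section
/- Let q = 2^t, n odd, t, i > 0 integers, and γ ∈ F_{q^2} nonzero such that (Tr_{q^2/q}(γ^{-(2^{i+1})}))^{(q-1)/gcd(2^{i+1}-1, 2^t-1)} ≠ 1. Then h(X) = γX + Tr_{q^{2n}/q}(X^{2^i(q^2+1)}) is a permutation of F_{q^{2n}}. -/
set_option linter.unusedSectionVars false

section aux

variable {F : Type*} [Field F] [Fintype F] [CharP F 2]

/-- fixed points of `x ↦ x^Q` are fixed by all powers -/
lemma aux_fixed_pow {c : F} {Q : ℕ} (hc : c ^ Q = c) : ∀ j, c ^ (Q ^ j) = c := by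
  intro j
  induction j with
  | zero => simp
  | succ j ih => rw [pow_succ, pow_mul, ih, hc]

variable (q N : ℕ)

/-- the trace-like sum -/
def auxT (x : F) : F := ∑ j ∈ Finset.range N, x ^ q ^ j

lemma auxT_shift (hpow : ∀ x : F, x ^ q ^ N = x) (x : F) :
    auxT q N (x ^ q) = auxT q N x := by
  unfold auxT
  have h1 : ∀ j : ℕ, (x ^ q) ^ q ^ j = x ^ q ^ (j + 1) := by
    intro j
    rw [← pow_mul, pow_succ']
  simp_rw [h1]
  have hs := Finset.sum_range_succ' (fun j => x ^ q ^ j) N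
  rw [Finset.sum_range_succ] at hs
  simp only [pow_zero, pow_one, hpow] at hs
  exact (add_right_cancel hs).symm

lemma auxT_add {t : ℕ} (hq : q = 2 ^ t) (x y : F) :
    auxT q N (x + y) = auxT q N x + auxT q N y := by
  unfold auxT
  rw [← Finset.sum_add_distrib]
  apply Finset.sum_congr rfl
  intro j _
  rw [hq, ← pow_mul 2 t j, add_pow_char_pow]

lemma auxT_sq (x : F) : auxT q N (x ^ 2) = auxT q N x ^ 2 := by
  unfold auxT
  rw [sum_pow_char]
  apply Finset.sum_congr rfl
  intro j _
  rw [← pow_mul, ← pow_mul, Nat.mul_comm]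

lemma auxT_pow2 (k : ℕ) (x : F) : auxT q N (x ^ 2 ^ k) = auxT q N x ^ 2 ^ k := by
  induction k with
  | zero => simp
  | succ k ih =>
    have h : x ^ 2 ^ (k + 1) = (x ^ 2 ^ k) ^ 2 := by
      rw [← pow_mul, ← pow_succ]
    rw [h, auxT_sq, ih, ← pow_mul, ← pow_succ]

lemma auxT_smul {c : F} (hc : c ^ q = c) (x : F) :
    auxT q N (c * x) = c * auxT q N x := by
  unfold auxT
  rw [Finset.mul_sum]
  apply Finset.sum_congr rfl
  intro j _
  rw [mul_pow, aux_fixed_pow hc]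

end aux

/-- for `n` odd, under the trace condition on `γ`,
`h(X) = γX + Tr_{q^{2n}/q}(X^{2^i(q^2+1)})` is a permutation of `F_{q^{2n}}`.
Here `Tr_{q^2/q}(x) = x + x^q`. -/
theorem stmt_9 {F : Type*} [Field F] [Fintype F] (t n i : ℕ)
    (ht : 0 < t) (hn : 0 < n) (hi : 0 < i) (hnodd : Odd n)
    (hcard : Fintype.card F = (2 ^ t) ^ (2 * n))
    (Tr : F → F) (hTr : ∀ x, Tr x = ∑ j ∈ Finset.range (2 * n), x ^ ((2 ^ t) ^ j))
    (γ : F) (hγ : γ ≠ 0) (hγq2 : γ ^ ((2 ^ t) ^ 2) = γ)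
    (hcond : (γ⁻¹ ^ (2 ^ (i + 1)) + (γ⁻¹ ^ (2 ^ (i + 1))) ^ (2 ^ t)) ^
        ((2 ^ t - 1) / Nat.gcd (2 ^ (i + 1) - 1) (2 ^ t - 1)) ≠ 1) :
    Function.Bijective (fun X : F => γ * X + Tr (X ^ (2 ^ i * ((2 ^ t) ^ 2 + 1)))) := by
  -- set up characteristic 2
  have hchar2 : ringChar F = 2 := by
    rw [FiniteField.even_card_iff_char_two, hcard]
    have : 2 ∣ (2 ^ t) ^ (2 * n) := by
      refine dvd_pow ?_ (by omega)
      exact dvd_pow_self 2 (by omega)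
    omega
  haveI : CharP F 2 := by rw [← hchar2]; exact ringChar.charP F
  have h2 : (2 : F) = 0 := CharTwo.two_eq_zero
  set q : ℕ := 2 ^ t with hqdef
  set N : ℕ := 2 * n with hNdef
  have hq1 : 1 ≤ q := Nat.one_le_two_pow
  -- x ^ card = x
  have hpowc : ∀ x : F, x ^ q ^ N = x := by
    intro x
    rw [← hcard]; exact FiniteField.pow_card x
  set T : F → F := auxT q N with hTdef
  have hTr' : Tr = T := by
    funext x; rw [hTr x]; rfl
  -- T of q-th power
  have hTshift : ∀ x : F, T (x ^ q) = T x := auxT_shift q N hpowc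
  have hTq2 : ∀ x : F, T (x ^ q ^ 2) = T x := by
    intro x
    have h : x ^ q ^ 2 = (x ^ q) ^ q := by
      rw [sq, pow_mul]
    rw [h, hTshift, hTshift]
  have hTadd : ∀ x y : F, T (x + y) = T x + T y := auxT_add q N rfl
  have hTpow2 : ∀ (k : ℕ) (x : F), T (x ^ 2 ^ k) = T x ^ 2 ^ k := auxT_pow2 q N
  -- q-th power is additive
  have haddq : ∀ a b : F, (a + b) ^ q = a ^ q + b ^ q := by
    intro a b
    rw [hqdef]
    exact add_pow_char_pow a b 2 t
  -- T x is in F_q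
  have hTfix : ∀ x : F, (T x) ^ q = T x := by
    intro x
    have h : (T x) ^ q = T (x ^ q) := by
      rw [hqdef, ← hTpow2 t]
    rw [h, hTshift]
  -- value of T on γ⁻¹ : equals γ⁻¹ + (γ⁻¹)^q since n is odd
  have hg2 : (γ⁻¹ : F) ^ q ^ 2 = γ⁻¹ := by
    rw [inv_pow, hγq2]
  have hTg : T γ⁻¹ = γ⁻¹ + (γ⁻¹) ^ q := by
    have key : ∀ m : ℕ, (∑ j ∈ Finset.range (2 * m), (γ⁻¹ : F) ^ q ^ j)
        = m • (γ⁻¹ + (γ⁻¹) ^ q) := by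
      intro m
      induction m with
      | zero => simp
      | succ m ih =>
        have h2m : (γ⁻¹ : F) ^ q ^ (2 * m) = γ⁻¹ := by
          rw [pow_mul q 2 m, aux_fixed_pow hg2]
        have h2m1 : (γ⁻¹ : F) ^ q ^ (2 * m + 1) = (γ⁻¹) ^ q := by
          rw [pow_succ q (2 * m), pow_mul, h2m]
        have hh : 2 * (m + 1) = (2 * m + 1) + 1 := by ring
        rw [hh, Finset.sum_range_succ, Finset.sum_range_succ, ih, h2m, h2m1,
          succ_nsmul]
        ring
    have hT : T γ⁻¹ = n • (γ⁻¹ + (γ⁻¹) ^ q) := key n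
    rw [hT]
    obtain ⟨k, hk⟩ := hnodd
    rw [hk, add_nsmul, one_nsmul, mul_nsmul, two_nsmul, CharTwo.add_self_eq_zero,
      smul_zero, zero_add]
  -- injectivity
  rw [← Finite.injective_iff_bijective]
  intro x y hxy
  simp only [hTr'] at hxy
  set d : ℕ := 2 ^ i * (q ^ 2 + 1) with hddef
  set u : F := x + y with hudef
  set c : F := γ * u with hcdef
  by_cases hu : u = 0
  · have hxy0 : x = -y := eq_neg_of_add_eq_zero_left hu
    rw [CharTwo.neg_eq] at hxy0
    exact hxy0
  · exfalso
    have hc0 : c ≠ 0 := mul_ne_zero hγ hu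
    -- c = T (x^d) + T (y^d)
    have hc : c = T (x ^ d) + T (y ^ d) := by
      have hh : γ * x + T (x ^ d) = γ * y + T (y ^ d) := hxy
      rw [hcdef, hudef]
      linear_combination hh + (γ * y - T (x ^ d)) * h2
    -- c is in F_q
    have hcq : c ^ q = c := by
      rw [hc, haddq, hTfix, hTfix]
    have hcq2 : c ^ q ^ 2 = c := aux_fixed_pow hcq 2
    have hu' : u = γ⁻¹ * c := by
      rw [hcdef]; field_simp
    -- u fixed by q^2
    have hu2 : u ^ q ^ 2 = u := by
      rw [hu', mul_pow, hg2, hcq2]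
    -- key identity : x^d = y^d + (y^{q^2} * u)^{2^i} + (u*y)^{2^i} + u^{2^{i+1}}
    have hkey : x ^ d = y ^ d + (y ^ q ^ 2 * u) ^ 2 ^ i + (u * y) ^ 2 ^ i
        + u ^ 2 ^ (i + 1) := by
      have hx : x = y + u := by rw [hudef]; linear_combination (-y) * h2
      have hq2 : q ^ 2 = 2 ^ (t * 2) := by
        rw [hqdef, ← pow_mul 2 t 2]
      have hxq2 : x ^ q ^ 2 = y ^ q ^ 2 + u := by
        have hh : x ^ q ^ 2 = y ^ q ^ 2 + u ^ q ^ 2 := by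
          rw [hx, hq2, add_pow_char_pow]
        rw [hh, hu2]
      have hsplit : x ^ (q ^ 2 + 1) = y ^ (q ^ 2) * y + y ^ q ^ 2 * u + u * y + u * u := by
        rw [pow_succ x (q ^ 2), hxq2, hx]
        ring
      have hd1 : x ^ d = (x ^ (q ^ 2 + 1)) ^ 2 ^ i := by
        rw [hddef, mul_comm (2 ^ i) (q ^ 2 + 1), pow_mul]
      have hd2 : y ^ d = (y ^ (q ^ 2 + 1)) ^ 2 ^ i := by
        rw [hddef, mul_comm (2 ^ i) (q ^ 2 + 1), pow_mul]
      rw [hd1, hd2, hsplit]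
      have hap : ∀ a b : F, (a + b) ^ 2 ^ i = a ^ 2 ^ i + b ^ 2 ^ i := fun a b =>
        add_pow_char_pow a b 2 i
      rw [hap, hap, hap]
      have huu : (u * u) ^ 2 ^ i = u ^ 2 ^ (i + 1) := by
        rw [← sq, ← pow_mul, ← pow_succ']
      rw [huu, pow_succ y (q ^ 2)]
    -- hence c = (T u)^{2^{i+1}}
    have hTuy : T (y ^ q ^ 2 * u) = T (u * y) := by
      have hh : y ^ q ^ 2 * u = (u * y) ^ q ^ 2 := by
        rw [mul_pow, hu2]; ring
      rw [hh, hTq2]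
    have hceq : c = (T u) ^ 2 ^ (i + 1) := by
      rw [hc, hkey, hTadd, hTadd, hTadd, hTpow2 i, hTpow2 i, hTuy, hTpow2 (i + 1)]
      have generic : ∀ p a b : F, p + a + a + b + p = b := by
        intro p a b
        linear_combination (p + a) * h2
      exact generic _ _ _
    -- compute T u
    have hTu : T u = c * (γ⁻¹ + (γ⁻¹) ^ q) := by
      have hTsm : ∀ z : F, T (c * z) = c * T z := auxT_smul q N hcq
      rw [hu', mul_comm γ⁻¹ c, hTsm, hTg]
    -- the final equation
    set A : F := γ⁻¹ ^ 2 ^ (i + 1) + (γ⁻¹ ^ 2 ^ (i + 1)) ^ q with hAdef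
    have hfin : c = c ^ 2 ^ (i + 1) * A := by
      have hs : (γ⁻¹ + (γ⁻¹ : F) ^ q) ^ 2 ^ (i + 1) = A := by
        rw [hAdef, add_pow_char_pow γ⁻¹ (γ⁻¹ ^ q) 2 (i + 1),
          pow_right_comm γ⁻¹ q (2 ^ (i + 1))]
      conv_lhs => rw [hceq]
      rw [hTu, mul_pow, hs]
    -- cancel c
    set m : ℕ := 2 ^ (i + 1) - 1 with hmdef
    have hm1 : 2 ^ (i + 1) = 1 + m := by
      have : 1 ≤ 2 ^ (i + 1) := Nat.one_le_two_pow
      omega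
    have hcm : c ^ m * A = 1 := by
      have hh : c * 1 = c * (c ^ m * A) := by
        conv_lhs => rw [mul_one, hfin]
        rw [hm1, pow_add, pow_one]; ring
      exact (mul_left_cancel₀ hc0 hh).symm
    -- c ^ (q - 1) = 1
    set Q : ℕ := q - 1 with hQdef
    have hcQ : c ^ Q = 1 := by
      have h1 : c ^ Q * c = 1 * c := by
        rw [one_mul, ← pow_succ]
        have hh : Q + 1 = q := by rw [hQdef]; omega
        rw [hh, hcq]
      exact mul_right_cancel₀ hc0 h1
    -- derive contradiction with hcond
    set g0 : ℕ := Nat.gcd m Q with hg0def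
    apply hcond
    have key : A ^ (Q / g0) = c ^ (m * (Q / g0)) * A ^ (Q / g0) := by
      have hmul : m * (Q / g0) = m / g0 * Q := by
        have hdm : g0 ∣ m := Nat.gcd_dvd_left m Q
        have hdQ : g0 ∣ Q := Nat.gcd_dvd_right m Q
        obtain ⟨a, ha⟩ := hdm
        obtain ⟨b, hb⟩ := hdQ
        have hg0pos : 0 < g0 := by
          apply Nat.gcd_pos_of_pos_left
          have : (2:ℕ) ≤ 2 ^ (i + 1) := by
            calc (2:ℕ) = 2 ^ 1 := (pow_one 2).symm
            _ ≤ 2 ^ (i + 1) := Nat.pow_le_pow_right (by norm_num) (by omega)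
          omega
        rw [ha, hb, Nat.mul_div_cancel_left b hg0pos, Nat.mul_div_cancel_left a hg0pos]
        ring
      rw [hmul, mul_comm (m / g0) Q, pow_mul c Q (m / g0), hcQ, one_pow, one_mul]
    rw [key, pow_mul c m (Q / g0), ← mul_pow, hcm, one_pow]
end

section
/- Let q = 2^t, n even, t, i > 0 integers, γ ∈ F_{q^2} nonzero, and h(X) = γX + Tr_{q^{2n}/q}(X^{2^i(q^2+1)}) over F_{q^{2n}}. For every c ∈ F_{q^2} \ F_2 and every a, b ∈ F_{q^{2n}}, the equation h(X+a) + c·h(X) = b has exactly one solution X ∈ F_{q^{2n}}; i.e., h is perfect c-nonlinear for all c ∈ F_{q^2} \ F_2. -/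
/-- for `n` even, `h(X) = γX + Tr_{q^{2n}/q}(X^{2^i(q^2+1)})` is PcN for
all `c ∈ F_{q^2} \ F_2`. -/
theorem stmt_10 {F : Type*} [Field F] [Fintype F] (t n i : ℕ)
    (ht : 0 < t) (hn : 0 < n) (hi : 0 < i) (hneven : Even n)
    (hcard : Fintype.card F = (2 ^ t) ^ (2 * n))
    (Tr : F → F) (hTr : ∀ x, Tr x = ∑ j ∈ Finset.range (2 * n), x ^ ((2 ^ t) ^ j))
    (γ : F) (hγ : γ ≠ 0) (hγq2 : γ ^ ((2 ^ t) ^ 2) = γ)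
    (h : F → F) (hh : ∀ X, h X = γ * X + Tr (X ^ (2 ^ i * ((2 ^ t) ^ 2 + 1))))
    (c : F) (hcq2 : c ^ ((2 ^ t) ^ 2) = c) (hc0 : c ≠ 0) (hc1 : c ≠ 1) :
    ∀ a b : F, ∃! X : F, h (X + a) + c * h X = b := by
  classical
  -- the characteristic is 2
  haveI hC : CharP F 2 := by
    haveI hcp := ringChar.charP F
    have hprime : (ringChar F).Prime := CharP.char_is_prime F (ringChar F)
    obtain ⟨k, -, hk⟩ := FiniteField.card F (ringChar F)
    have h2 : ringChar F = 2 := by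
      have hdvd : ringChar F ∣ 2 ^ (t * (2 * n)) := by
        rw [pow_mul, ← hcard, hk]
        exact dvd_pow_self _ k.pos.ne'
      have := hprime.dvd_of_dvd_pow hdvd
      exact (Nat.prime_dvd_prime_iff_eq hprime Nat.prime_two).mp this
    rwa [h2] at hcp
  haveI hE : ExpChar F 2 := .prime Nat.prime_two
  have hself : ∀ x : F, x + x = 0 := fun x => CharTwo.add_self_eq_zero x
  have h2z : (2 : F) = 0 := CharTwo.two_eq_zero
  -- power gymnastics helpers
  have hpowpow : ∀ (x : F) (m k : ℕ), (x ^ m) ^ k = (x ^ k) ^ m := by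
    intro x m k
    rw [← pow_mul, mul_comm, pow_mul]
  have h2add : ∀ (x y : F) (m : ℕ), (x + y) ^ 2 ^ m = x ^ 2 ^ m + y ^ 2 ^ m :=
    fun x y m => add_pow_expChar_pow x y 2 m
  have h2sum : ∀ (s : Finset ℕ) (f : ℕ → F) (m : ℕ),
      (∑ j ∈ s, f j) ^ 2 ^ m = ∑ j ∈ s, (f j) ^ 2 ^ m := by
    intro s f m
    simpa only [iterateFrobenius_def] using map_sum (iterateFrobenius F 2 m) f s
  set q : ℕ := 2 ^ t with hqdef
  have hqm : ∀ m : ℕ, q ^ m = 2 ^ (t * m) := fun m => by rw [hqdef, pow_mul]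
  -- Frobenius-type facts
  have haddq : ∀ (x y : F) (j : ℕ), (x + y) ^ q ^ j = x ^ q ^ j + y ^ q ^ j := by
    intro x y j
    rw [hqm]
    exact h2add x y (t * j)
  have hpowcard : ∀ x : F, x ^ q ^ (2 * n) = x := by
    intro x
    rw [hqdef, ← hcard]
    exact FiniteField.pow_card x
  -- Tr is additive
  have hTradd : ∀ x y : F, Tr (x + y) = Tr x + Tr y := by
    intro x y
    simp only [hTr, haddq]
    exact Finset.sum_add_distrib
  -- Tr ∘ Frobenius = Tr
  have hTrq : ∀ x : F, Tr (x ^ q) = Tr x := by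
    intro x
    simp only [hTr]
    have hcomm : ∀ j : ℕ, (x ^ q) ^ q ^ j = x ^ q ^ (j + 1) := by
      intro j
      rw [← pow_mul, ← pow_succ']
    simp only [hcomm]
    have e1 := Finset.sum_range_succ' (fun j => x ^ q ^ j) (2 * n)
    have e2 := Finset.sum_range_succ (fun j => x ^ q ^ j) (2 * n)
    rw [e2] at e1
    have hlast : x ^ q ^ (2 * n) = x ^ q ^ 0 := by
      rw [hpowcard, pow_zero, pow_one]
    rw [hlast] at e1
    exact (add_right_cancel e1.symm)
  have hTrq2 : ∀ x : F, Tr (x ^ q ^ 2) = Tr x := by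
    intro x
    have e : x ^ q ^ 2 = (x ^ q) ^ q := by rw [pow_two, pow_mul]
    rw [e, hTrq, hTrq]
  -- Tr values are fixed by the q-power (hence q²-power) Frobenius
  have hTrfix1 : ∀ x : F, (Tr x) ^ q = Tr x := by
    intro x
    calc (Tr x) ^ q = (∑ j ∈ Finset.range (2 * n), x ^ q ^ j) ^ q := by rw [hTr]
      _ = ∑ j ∈ Finset.range (2 * n), (x ^ q ^ j) ^ q := by
          rw [hqdef]; exact h2sum _ _ t
      _ = ∑ j ∈ Finset.range (2 * n), (x ^ q) ^ q ^ j :=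
          Finset.sum_congr rfl fun j _ => hpowpow x (q ^ j) q
      _ = Tr (x ^ q) := (hTr _).symm
      _ = Tr x := hTrq x
  have hTrfix : ∀ x : F, (Tr x) ^ q ^ 2 = Tr x := by
    intro x
    have e : (Tr x) ^ q ^ 2 = ((Tr x) ^ q) ^ q := by rw [pow_two, pow_mul]
    rw [e, hTrfix1, hTrfix1]
  -- elements fixed by q²-Frobenius have zero trace (n even)
  have hq2fixpow : ∀ (u : F), u ^ q ^ 2 = u → ∀ m : ℕ, u ^ q ^ (2 * m) = u := by
    intro u hu m
    induction m with
    | zero => simp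
    | succ m ih =>
      have e : 2 * (m + 1) = 2 * m + 2 := by ring
      rw [e, pow_add, pow_mul, ih]
      exact hu
  have hTrzero : ∀ u : F, u ^ q ^ 2 = u → Tr u = 0 := by
    intro u hu
    have key : ∀ m : ℕ, ∑ j ∈ Finset.range (2 * m), u ^ q ^ j = m • (u + u ^ q) := by
      intro m
      induction m with
      | zero => simp
      | succ m ih =>
        have h2m : 2 * (m + 1) = (2 * m + 1) + 1 := by ring
        rw [h2m, Finset.sum_range_succ, Finset.sum_range_succ, ih]
        have e1 : u ^ q ^ (2 * m) = u := hq2fixpow u hu m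
        have e2 : u ^ q ^ (2 * m + 1) = u ^ q := by
          rw [pow_succ, pow_mul, e1]
        rw [e1, e2, succ_nsmul]
        ring
    obtain ⟨m, hm⟩ := hneven
    rw [hTr, key n, hm, add_nsmul, hself]
  -- key cancellation lemma
  have hKey : ∀ Z u : F, u ^ q ^ 2 = u →
      Tr (Z ^ (2 ^ i * (q ^ 2 + 1))) + Tr ((Z + u) ^ (2 ^ i * (q ^ 2 + 1))) = 0 := by
    intro Z u hu
    have hrw : ∀ w : F, w ^ (2 ^ i * (q ^ 2 + 1)) = (w ^ (q ^ 2 + 1)) ^ 2 ^ i := by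
      intro w
      rw [mul_comm, pow_mul]
    have e1 : (Z + u) ^ (q ^ 2 + 1) = Z ^ (q ^ 2 + 1) + (u * Z ^ q ^ 2 + (u * Z + u ^ 2)) := by
      rw [pow_succ, haddq, hu, pow_succ]
      ring
    have e2 : (Z + u) ^ (2 ^ i * (q ^ 2 + 1)) =
        Z ^ (2 ^ i * (q ^ 2 + 1)) + ((u * Z ^ q ^ 2) ^ 2 ^ i + ((u * Z) ^ 2 ^ i
          + (u ^ 2) ^ 2 ^ i)) := by
      rw [hrw, e1, h2add, h2add, h2add, ← hrw]
    have e3 : (u * Z ^ q ^ 2) ^ 2 ^ i = ((u * Z) ^ 2 ^ i) ^ q ^ 2 := by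
      conv_lhs => rw [← hu]
      rw [← mul_pow]
      exact hpowpow (u * Z) (q ^ 2) (2 ^ i)
    have e4 : Tr (((u * Z) ^ 2 ^ i) ^ q ^ 2) = Tr ((u * Z) ^ 2 ^ i) := hTrq2 _
    have e5 : Tr ((u ^ 2) ^ 2 ^ i) = 0 := by
      apply hTrzero
      rw [hpowpow (u ^ 2) (2 ^ i) (q ^ 2), hpowpow u 2 (q ^ 2), hu]
    rw [e2, hTradd, hTradd, hTradd, e3, e4, e5]
    linear_combination (Tr (Z ^ (2 ^ i * (q ^ 2 + 1))) + Tr ((u * Z) ^ 2 ^ i)) * h2z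
  -- the difference map is injective, hence bijective
  intro a b
  set K : ℕ := 2 ^ i * (q ^ 2 + 1) with hK
  have hinj : Function.Injective (fun X : F => h (X + a) + c * h X) := by
    intro X Y hXY
    simp only [hh] at hXY
    have hYX : Y = X + (X + Y) := by
      rw [← add_assoc, hself, zero_add]
    have hE : γ * (1 + c) * (X + Y) =
        Tr ((X + a) ^ K) + Tr ((Y + a) ^ K) + c * (Tr (X ^ K) + Tr (Y ^ K)) := by
      linear_combination hXY + (γ * (1 + c) * Y - Tr ((X + a) ^ K) - c * Tr (X ^ K)) * h2z
    -- the RHS is fixed by the q²-Frobenius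
    have hsfix : (γ * (1 + c) * (X + Y)) ^ q ^ 2 = γ * (1 + c) * (X + Y) := by
      rw [hE, haddq, haddq, mul_pow, haddq, hTrfix, hTrfix, hTrfix, hTrfix, hcq2]
    have hc1' : (1 : F) + c ≠ 0 := by
      intro hcontra
      exact hc1 (by linear_combination hcontra - h2z)
    have hγc : γ * (1 + c) ≠ 0 := mul_ne_zero hγ hc1'
    have hu : (X + Y) ^ q ^ 2 = X + Y := by
      have expand : (γ * (1 + c) * (X + Y)) ^ q ^ 2 = γ * (1 + c) * (X + Y) ^ q ^ 2 := by
        rw [mul_pow, mul_pow, hγq2, haddq, hcq2, one_pow]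
      rw [expand] at hsfix
      exact mul_left_cancel₀ hγc hsfix
    -- now apply the cancellation lemma
    have k1 : Tr ((X + a) ^ K) + Tr ((Y + a) ^ K) = 0 := by
      have hx : Y + a = (X + a) + (X + Y) := by linear_combination hYX
      rw [hx]
      exact hKey (X + a) (X + Y) hu
    have k2 : Tr (X ^ K) + Tr (Y ^ K) = 0 := by
      conv_lhs => rw [hYX]
      exact hKey X (X + Y) hu
    have hzero : γ * (1 + c) * (X + Y) = 0 := by
      rw [hE, k1, k2, mul_zero, add_zero]
    have hu0 : X + Y = 0 := by
      rcases mul_eq_zero.mp hzero with h' | h'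
      · exact absurd h' hγc
      · exact h'
    calc X = X + 0 := (add_zero X).symm
      _ = X + (Y + Y) := by rw [hself]
      _ = (X + Y) + Y := by ring
      _ = 0 + Y := by rw [hu0]
      _ = Y := zero_add Y
  have hbij : Function.Bijective (fun X : F => h (X + a) + c * h X) :=
    Finite.injective_iff_bijective.mp hinj
  exact hbij.existsUnique b
end

section
/- Let q = 2^t with gcd(i, t) = 1, n even, t, i > 0 integers, γ ∈ F_{q^2} nonzero, and h(X) = γX + Tr_{q^{2n}/q}(X^{2^i(q^2+1)}) over F_{q^{2n}}. For every c ∈ F_{q^{2n}} \ F_{q^2} and every a, b ∈ F_{q^{2n}}, the equation h(X+a) + c·h(X) = b has at most two solutions X ∈ F_{q^{2n}}; i.e., the c-differential uniformity of h is at most 2 for such c. -/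
set_option linter.unusedSectionVars false

namespace Stmt11Aux

variable {F : Type*} [Field F]

lemma char_two_of_card [Fintype F] {t n : ℕ}
    (hcard : Fintype.card F = (2 ^ t) ^ (2 * n)) : CharP F 2 := by
  obtain ⟨p, hcp⟩ := CharP.exists F
  haveI := hcp
  obtain ⟨k, hp, hk⟩ := FiniteField.card F p
  have hdvd : p ∣ (2 ^ t) ^ (2 * n) := by
    rw [← hcard, hk]
    exact dvd_pow_self p (by exact_mod_cast k.2.ne')
  have hp2 : p = 2 := by
    have h2 : p ∣ 2 := hp.dvd_of_dvd_pow (hp.dvd_of_dvd_pow hdvd)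
    exact (Nat.prime_dvd_prime_iff_eq hp Nat.prime_two).mp h2
  exact hp2 ▸ hcp

variable [CharP F 2]

lemma pow2inj {N : ℕ} {x y : F} (hxy : x ^ 2 ^ N = y ^ 2 ^ N) : x = y := by
  have h0 : (x + y) ^ 2 ^ N = 0 := by
    rw [add_pow_char_pow, hxy, CharTwo.add_self_eq_zero]
  have hx : x + y = 0 :=
    pow_eq_zero_iff (n := 2 ^ N) (pow_ne_zero _ (two_ne_zero)) |>.mp h0
  have := neg_eq_of_add_eq_zero_left hx
  rw [CharTwo.neg_eq] at this
  exact this.symm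

lemma pow_mul_fix {w : F} {m : ℕ} (hw : w ^ 2 ^ m = w) (k : ℕ) : w ^ 2 ^ (m * k) = w := by
  induction k with
  | zero => simp
  | succ k IH =>
    have : m * (k + 1) = m * k + m := by ring
    rw [this, pow_add, pow_mul, IH, hw]

lemma fixed_gcd : ∀ (m l : ℕ) (w : F), w ^ 2 ^ m = w → w ^ 2 ^ l = w →
    w ^ 2 ^ (Nat.gcd m l) = w := by
  intro m
  induction m using Nat.strong_induction_on with
  | _ m IH =>
    intro l w hm hl
    rcases Nat.eq_zero_or_pos m with h0 | hpos
    · subst h0; simpa [Nat.gcd_zero_left] using hl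
    · rw [Nat.gcd_rec]
      refine IH (l % m) (Nat.mod_lt _ hpos) m w ?_ hm
      have hq : w ^ 2 ^ (m * (l / m)) = w := pow_mul_fix hm _
      have key : (w ^ 2 ^ (l % m)) ^ 2 ^ (m * (l / m)) = w ^ 2 ^ (m * (l / m)) := by
        rw [← pow_mul, ← pow_add, Nat.mod_add_div, hl, hq]
      exact pow2inj key

omit [CharP F 2] in
lemma sum_periodic {M : Type*} [AddCommMonoid M] (g : ℕ → M) (hg : ∀ j, g (j + 2) = g j) :
    ∀ m, ∑ j ∈ Finset.range (2 * m), g j = m • (g 0 + g 1) := by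
  have hg2 : ∀ j k, g (j + 2 * k) = g j := by
    intro j k
    induction k with
    | zero => simp
    | succ k IHk => rw [show j + 2 * (k + 1) = j + 2 * k + 2 by ring, hg, IHk]
  intro m
  induction m with
  | zero => simp
  | succ m IH =>
    have e0 : g (2 * m) = g 0 := by simpa using hg2 0 m
    have e1 : g (2 * m + 1) = g 1 := by
      have := hg2 1 m
      rwa [show 1 + 2 * m = 2 * m + 1 by ring] at this
    rw [show 2 * (m + 1) = (2 * m + 1) + 1 by ring, Finset.sum_range_succ,
      Finset.sum_range_succ, IH, e0, e1, succ_nsmul]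
    abel

variable {t n : ℕ} {Tr : F → F}

lemma tr_add (hTr : ∀ x : F, Tr x = ∑ j ∈ Finset.range (2 * n), x ^ ((2 ^ t) ^ j))
    (x y : F) : Tr (x + y) = Tr x + Tr y := by
  rw [hTr, hTr, hTr, ← Finset.sum_add_distrib]
  refine Finset.sum_congr rfl fun j _ => ?_
  rw [show ((2 : ℕ) ^ t) ^ j = 2 ^ (t * j) from (pow_mul 2 t j).symm]
  exact add_pow_char_pow ..

lemma tr_pow2 (hTr : ∀ x : F, Tr x = ∑ j ∈ Finset.range (2 * n), x ^ ((2 ^ t) ^ j))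
    (N : ℕ) (x : F) : Tr (x ^ 2 ^ N) = (Tr x) ^ 2 ^ N := by
  rw [hTr, hTr, sum_pow_char_pow]
  refine Finset.sum_congr rfl fun j _ => ?_
  rw [pow_right_comm]

lemma tr_q (hTr : ∀ x : F, Tr x = ∑ j ∈ Finset.range (2 * n), x ^ ((2 ^ t) ^ j))
    (hfix : ∀ x : F, x ^ ((2 ^ t) ^ (2 * n)) = x) (x : F) : (Tr x) ^ 2 ^ t = Tr x := by
  rw [← tr_pow2 hTr t x, hTr, hTr]
  have key : ∀ j : ℕ, (x ^ 2 ^ t) ^ ((2 ^ t) ^ j) = x ^ ((2 ^ t) ^ (j + 1)) := by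
    intro j
    rw [← pow_mul, pow_succ']
  calc ∑ j ∈ Finset.range (2 * n), (x ^ 2 ^ t) ^ ((2 ^ t) ^ j)
      = ∑ j ∈ Finset.range (2 * n), x ^ ((2 ^ t) ^ (j + 1)) :=
        Finset.sum_congr rfl fun j _ => key j
    _ = ∑ j ∈ Finset.range (2 * n), x ^ ((2 ^ t) ^ j) := by
        have e1 := Finset.sum_range_succ' (fun j => x ^ ((2 ^ t) ^ j)) (2 * n)
        have e2 := Finset.sum_range_succ (fun j => x ^ ((2 ^ t) ^ j)) (2 * n)
        have h0 : x ^ ((2 ^ t) ^ (0 : ℕ)) = x := by simp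
        have h2n : x ^ ((2 ^ t) ^ (2 * n)) = x := hfix x
        rw [e2, h2n, h0] at e1
        exact (add_right_cancel e1).symm

omit [CharP F 2] in
lemma tr_smul (hTr : ∀ x : F, Tr x = ∑ j ∈ Finset.range (2 * n), x ^ ((2 ^ t) ^ j))
    {s : F} (hs : s ^ 2 ^ t = s) (x : F) : Tr (s * x) = s * Tr x := by
  have hsj : ∀ j : ℕ, s ^ ((2 ^ t) ^ j) = s := by
    intro j
    induction j with
    | zero => simp
    | succ j IH => rw [pow_succ, pow_mul, IH, hs]
  rw [hTr, hTr, Finset.mul_sum]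
  refine Finset.sum_congr rfl fun j _ => ?_
  rw [mul_pow, hsj]

lemma tr_q2_zero (hTr : ∀ x : F, Tr x = ∑ j ∈ Finset.range (2 * n), x ^ ((2 ^ t) ^ j))
    (hne : Even n) {z : F} (hz : z ^ ((2 ^ t) ^ 2) = z) : Tr z = 0 := by
  have hper : ∀ j, z ^ ((2 ^ t) ^ (j + 2)) = z ^ ((2 ^ t) ^ j) := by
    intro j
    rw [show (j + 2) = 2 + j by ring, pow_add, pow_mul, hz]
  rw [hTr]
  rw [sum_periodic (fun j => z ^ ((2 ^ t) ^ j)) hper n]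
  obtain ⟨k, hk⟩ := hne
  have h2k : n = 2 * k := by omega
  rw [h2k, mul_comm 2 k, mul_nsmul, two_nsmul, CharTwo.add_self_eq_zero]

/-- The bilinear form `B(x,y) = Tr(x y^{q²} + x^{q²} y)`. -/
def trB (Tr : F → F) (Qe : ℕ) (x y : F) : F := Tr (x * y ^ Qe + x ^ Qe * y)

/-- The quadratic form `Q(x) = Tr(x^{q²+1})`. -/
def trQ (Tr : F → F) (Qe : ℕ) (x : F) : F := Tr (x ^ Qe * x)

lemma pow_qe_add (x y : F) : (x + y) ^ ((2 ^ t) ^ 2) = x ^ ((2 ^ t) ^ 2) + y ^ ((2 ^ t) ^ 2) := by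
  rw [show ((2 : ℕ) ^ t) ^ 2 = 2 ^ (t * 2) from (pow_mul 2 t 2).symm]
  exact add_pow_char_pow ..

omit [CharP F 2] in
lemma fq_qe {s : F} (hs : s ^ 2 ^ t = s) : s ^ ((2 ^ t) ^ 2) = s := by
  rw [pow_two ((2 : ℕ) ^ t), pow_mul, hs, hs]

lemma tr_qe (hTr : ∀ x : F, Tr x = ∑ j ∈ Finset.range (2 * n), x ^ ((2 ^ t) ^ j))
    (hfix : ∀ x : F, x ^ ((2 ^ t) ^ (2 * n)) = x) (x : F) :
    (Tr x) ^ ((2 ^ t) ^ 2) = Tr x := fq_qe (tr_q hTr hfix x)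

lemma trB_fq (hTr : ∀ x : F, Tr x = ∑ j ∈ Finset.range (2 * n), x ^ ((2 ^ t) ^ j))
    (hfix : ∀ x : F, x ^ ((2 ^ t) ^ (2 * n)) = x) (x y : F) :
    (trB Tr ((2 ^ t) ^ 2) x y) ^ 2 ^ t = trB Tr ((2 ^ t) ^ 2) x y := tr_q hTr hfix _

lemma trQ_fq (hTr : ∀ x : F, Tr x = ∑ j ∈ Finset.range (2 * n), x ^ ((2 ^ t) ^ j))
    (hfix : ∀ x : F, x ^ ((2 ^ t) ^ (2 * n)) = x) (x : F) :
    (trQ Tr ((2 ^ t) ^ 2) x) ^ 2 ^ t = trQ Tr ((2 ^ t) ^ 2) x := tr_q hTr hfix _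

lemma trB_add_left (hTr : ∀ x : F, Tr x = ∑ j ∈ Finset.range (2 * n), x ^ ((2 ^ t) ^ j))
    (x y z : F) : trB Tr ((2 ^ t) ^ 2) (x + y) z
      = trB Tr ((2 ^ t) ^ 2) x z + trB Tr ((2 ^ t) ^ 2) y z := by
  unfold trB
  rw [pow_qe_add, show (x + y) * z ^ ((2 ^ t) ^ 2) + (x ^ ((2 ^ t) ^ 2) + y ^ ((2 ^ t) ^ 2)) * z
      = (x * z ^ ((2 ^ t) ^ 2) + x ^ ((2 ^ t) ^ 2) * z)
        + (y * z ^ ((2 ^ t) ^ 2) + y ^ ((2 ^ t) ^ 2) * z) by ring, tr_add hTr]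

lemma trB_smul_left (hTr : ∀ x : F, Tr x = ∑ j ∈ Finset.range (2 * n), x ^ ((2 ^ t) ^ j))
    {s : F} (hs : s ^ 2 ^ t = s) (y x : F) :
    trB Tr ((2 ^ t) ^ 2) (s * y) x = s * trB Tr ((2 ^ t) ^ 2) y x := by
  unfold trB
  rw [mul_pow, fq_qe hs,
    show s * y * x ^ ((2 ^ t) ^ 2) + s * y ^ ((2 ^ t) ^ 2) * x
      = s * (y * x ^ ((2 ^ t) ^ 2) + y ^ ((2 ^ t) ^ 2) * x) by ring, tr_smul hTr hs]

lemma trB_smul_right (hTr : ∀ x : F, Tr x = ∑ j ∈ Finset.range (2 * n), x ^ ((2 ^ t) ^ j))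
    {s : F} (hs : s ^ 2 ^ t = s) (x y : F) :
    trB Tr ((2 ^ t) ^ 2) x (s * y) = s * trB Tr ((2 ^ t) ^ 2) x y := by
  unfold trB
  rw [mul_pow, fq_qe hs,
    show x * (s * y ^ ((2 ^ t) ^ 2)) + x ^ ((2 ^ t) ^ 2) * (s * y)
      = s * (x * y ^ ((2 ^ t) ^ 2) + x ^ ((2 ^ t) ^ 2) * y) by ring, tr_smul hTr hs]

lemma trB_fix_left (hTr : ∀ x : F, Tr x = ∑ j ∈ Finset.range (2 * n), x ^ ((2 ^ t) ^ j))
    (hfix : ∀ x : F, x ^ ((2 ^ t) ^ (2 * n)) = x) {z : F}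
    (hz : z ^ ((2 ^ t) ^ 2) = z) (x : F) : trB Tr ((2 ^ t) ^ 2) z x = 0 := by
  unfold trB
  have h1 : (z * x) ^ ((2 ^ t) ^ 2) = z * x ^ ((2 ^ t) ^ 2) := by rw [mul_pow, hz]
  rw [hz, ← h1, tr_add hTr]
  have h2 : Tr ((z * x) ^ ((2 ^ t) ^ 2)) = Tr (z * x) := by
    rw [show ((2 : ℕ) ^ t) ^ 2 = 2 ^ (t * 2) from (pow_mul 2 t 2).symm, tr_pow2 hTr,
      show (2 : ℕ) ^ (t * 2) = (2 ^ t) ^ 2 from pow_mul 2 t 2, tr_qe hTr hfix]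
  rw [h2, CharTwo.add_self_eq_zero]

lemma trB_fix_right (hTr : ∀ x : F, Tr x = ∑ j ∈ Finset.range (2 * n), x ^ ((2 ^ t) ^ j))
    (hfix : ∀ x : F, x ^ ((2 ^ t) ^ (2 * n)) = x) {z : F}
    (hz : z ^ ((2 ^ t) ^ 2) = z) (x : F) : trB Tr ((2 ^ t) ^ 2) x z = 0 := by
  unfold trB
  have h1 : (x * z) ^ ((2 ^ t) ^ 2) = x ^ ((2 ^ t) ^ 2) * z := by rw [mul_pow, hz]
  rw [hz, ← h1, tr_add hTr]
  have h2 : Tr ((x * z) ^ ((2 ^ t) ^ 2)) = Tr (x * z) := by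
    rw [show ((2 : ℕ) ^ t) ^ 2 = 2 ^ (t * 2) from (pow_mul 2 t 2).symm, tr_pow2 hTr,
      show (2 : ℕ) ^ (t * 2) = (2 ^ t) ^ 2 from pow_mul 2 t 2, tr_qe hTr hfix]
  rw [h2]
  rw [show Tr (x * z) + Tr (x * z) = 0 from CharTwo.add_self_eq_zero _]


lemma trB_add_right (hTr : ∀ x : F, Tr x = ∑ j ∈ Finset.range (2 * n), x ^ ((2 ^ t) ^ j))
    (x y z : F) : trB Tr ((2 ^ t) ^ 2) x (y + z)
      = trB Tr ((2 ^ t) ^ 2) x y + trB Tr ((2 ^ t) ^ 2) x z := by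
  unfold trB
  rw [pow_qe_add, show x * (y ^ ((2 ^ t) ^ 2) + z ^ ((2 ^ t) ^ 2)) + x ^ ((2 ^ t) ^ 2) * (y + z)
      = (x * y ^ ((2 ^ t) ^ 2) + x ^ ((2 ^ t) ^ 2) * y)
        + (x * z ^ ((2 ^ t) ^ 2) + x ^ ((2 ^ t) ^ 2) * z) by ring, tr_add hTr]

lemma trQ_add (hTr : ∀ x : F, Tr x = ∑ j ∈ Finset.range (2 * n), x ^ ((2 ^ t) ^ j))
    (x y : F) : trQ Tr ((2 ^ t) ^ 2) (x + y)
      = trQ Tr ((2 ^ t) ^ 2) x + trQ Tr ((2 ^ t) ^ 2) y + trB Tr ((2 ^ t) ^ 2) x y := by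
  unfold trQ trB
  rw [pow_qe_add, show (x ^ ((2 ^ t) ^ 2) + y ^ ((2 ^ t) ^ 2)) * (x + y)
      = (x ^ ((2 ^ t) ^ 2) * x + y ^ ((2 ^ t) ^ 2) * y)
        + (x * y ^ ((2 ^ t) ^ 2) + x ^ ((2 ^ t) ^ 2) * y) by ring, tr_add hTr, tr_add hTr]

lemma trQ_smul (hTr : ∀ x : F, Tr x = ∑ j ∈ Finset.range (2 * n), x ^ ((2 ^ t) ^ j))
    {s : F} (hs : s ^ 2 ^ t = s) (y : F) :
    trQ Tr ((2 ^ t) ^ 2) (s * y) = s ^ 2 * trQ Tr ((2 ^ t) ^ 2) y := by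
  unfold trQ
  rw [mul_pow, fq_qe hs,
    show s * y ^ ((2 ^ t) ^ 2) * (s * y) = (s * s) * (y ^ ((2 ^ t) ^ 2) * y) by ring,
    tr_smul hTr (by rw [mul_pow, hs]), ← sq]

lemma trQ_fix (hTr : ∀ x : F, Tr x = ∑ j ∈ Finset.range (2 * n), x ^ ((2 ^ t) ^ j))
    (hne : Even n) {z : F} (hz : z ^ ((2 ^ t) ^ 2) = z) : trQ Tr ((2 ^ t) ^ 2) z = 0 := by
  unfold trQ
  rw [hz]
  exact tr_q2_zero hTr hne (by rw [mul_pow, hz])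


end Stmt11Aux

open Stmt11Aux in
/-- with `gcd(i,t) = 1` and `n` even, `h(X) = γX + Tr_{q^{2n}/q}(X^{2^i(q^2+1)})`
has c-differential uniformity at most 2 for all `c ∈ F_{q^{2n}} \ F_{q^2}`. -/
theorem stmt_11 {F : Type*} [Field F] [Fintype F] (t n i : ℕ)
    (ht : 0 < t) (hn : 0 < n) (hi : 0 < i) (hneven : Even n) (hgcd : Nat.gcd i t = 1)
    (hcard : Fintype.card F = (2 ^ t) ^ (2 * n))
    (Tr : F → F) (hTr : ∀ x, Tr x = ∑ j ∈ Finset.range (2 * n), x ^ ((2 ^ t) ^ j))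
    (γ : F) (hγ : γ ≠ 0) (hγq2 : γ ^ ((2 ^ t) ^ 2) = γ)
    (h : F → F) (hh : ∀ X, h X = γ * X + Tr (X ^ (2 ^ i * ((2 ^ t) ^ 2 + 1))))
    (c : F) (hc : c ^ ((2 ^ t) ^ 2) ≠ c) :
    ∀ a b : F, Nat.card {X : F // h (X + a) + c * h X = b} ≤ 2 := by
  intro a b
  haveI hch : CharP F 2 := char_two_of_card hcard
  have h2 : (2 : F) = 0 := CharTwo.two_eq_zero
  have hfixall : ∀ x : F, x ^ ((2 ^ t) ^ (2 * n)) = x := fun x => by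
    rw [← hcard]; exact FiniteField.pow_card x
  set QQ : F → F := trQ Tr ((2 ^ t) ^ 2) with hQQ
  set BB : F → F → F := trB Tr ((2 ^ t) ^ 2) with hBB
  have hc1 : (1 : F) + c ≠ 0 := by
    intro h10
    have hcc : c = 1 := by linear_combination h10 - h2
    exact hc (by rw [hcc, one_pow])
  set μ : F := (1 + c)⁻¹ with hμ
  set dm : F := γ⁻¹ * μ with hdm
  have hγinv : (γ⁻¹) ^ ((2 ^ t) ^ 2) = γ⁻¹ := by rw [inv_pow, hγq2]
  have hg : ∀ X : F, Tr (X ^ (2 ^ i * ((2 ^ t) ^ 2 + 1))) = (QQ X) ^ 2 ^ i := by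
    intro X
    have e : X ^ (2 ^ i * ((2 ^ t) ^ 2 + 1)) = (X ^ ((2 ^ t) ^ 2) * X) ^ 2 ^ i := by
      calc X ^ (2 ^ i * ((2 ^ t) ^ 2 + 1)) = X ^ (((2 ^ t) ^ 2 + 1) * 2 ^ i) := by
            rw [Nat.mul_comm]
        _ = (X ^ ((2 ^ t) ^ 2 + 1)) ^ 2 ^ i := pow_mul X _ _
        _ = (X ^ ((2 ^ t) ^ 2) * X) ^ 2 ^ i := by rw [pow_succ]
    rw [e, hQQ]
    exact tr_pow2 hTr i _
  have hadd2 : ∀ u v : F, (u + v) ^ 2 ^ i = u ^ 2 ^ i + v ^ 2 ^ i := fun u v =>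
    add_pow_char_pow ..
  have hfq2i : ∀ w : F, w ^ 2 ^ t = w → (w ^ 2 ^ i) ^ 2 ^ t = w ^ 2 ^ i := fun w hw => by
    rw [pow_right_comm, hw]
  have hfq_add : ∀ w1 w2 : F, w1 ^ 2 ^ t = w1 → w2 ^ 2 ^ t = w2 →
      (w1 + w2) ^ 2 ^ t = w1 + w2 := by
    intro w1 w2 ha hb
    rw [add_pow_char_pow, ha, hb]
  have hQfq : ∀ x : F, (QQ x) ^ 2 ^ t = QQ x := fun x => trQ_fq hTr hfixall x
  have hBfq : ∀ x y : F, (BB x y) ^ 2 ^ t = BB x y := fun x y => trB_fq hTr hfixall x y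
  by_cases hex : ∃ X₁ X₂ : F, (h (X₁ + a) + c * h X₁ = b) ∧ (h (X₂ + a) + c * h X₂ = b)
      ∧ X₁ ≠ X₂
  · obtain ⟨X₁, X₂, hs1, hs2, hne12⟩ := hex
    have perpair : ∀ X' : F, h (X' + a) + c * h X' = b → X' ≠ X₁ →
        ∃ v : F, v ≠ 0 ∧ v ^ 2 ^ t = v ∧ v = v ^ 2 ^ i * (BB dm a) ^ 2 ^ i ∧
          X' = X₁ + (γ⁻¹ * ((v ^ 2 * QQ dm) ^ 2 ^ i + (v * BB X₁ dm) ^ 2 ^ i) + v * dm) := by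
      intro X' hsX hneX
      set Y : F := X₁ + X' with hYdef
      have hY0 : Y ≠ 0 := by
        rw [hYdef]
        intro h0
        exact hneX (by linear_combination h0 - X₁ * h2)
      have hX' : X' = X₁ + Y := by rw [hYdef]; linear_combination (-X₁) * h2
      have hsA := hs1
      rw [hX'] at hsX
      rw [hh, hh] at hsA hsX
      rw [hg, hg] at hsA hsX
      have hP1 : QQ (X₁ + a) = QQ X₁ + QQ a + BB X₁ a := trQ_add hTr X₁ a
      have hP2 : QQ (X₁ + Y + a) = QQ X₁ + QQ Y + QQ a + BB X₁ Y + BB X₁ a + BB Y a := by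
        rw [hQQ, hBB, trQ_add hTr (X₁ + Y) a, trQ_add hTr X₁ Y, trB_add_left hTr X₁ Y a]
        ring
      have hP3 : QQ (X₁ + Y) = QQ X₁ + QQ Y + BB X₁ Y := trQ_add hTr X₁ Y
      rw [hP1] at hsA
      rw [hP2, hP3] at hsX
      simp only [hadd2] at hsA hsX
      have hstar : (1 + c) * (γ * Y) + (1 + c) * ((QQ Y) ^ 2 ^ i + (BB X₁ Y) ^ 2 ^ i)
          + (BB Y a) ^ 2 ^ i = 0 := by
        linear_combination hsA + hsX + (b - γ * X₁ - γ * a - (QQ X₁) ^ 2 ^ i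
          - (QQ a) ^ 2 ^ i - (BB X₁ a) ^ 2 ^ i - c * (γ * X₁) - c * (QQ X₁) ^ 2 ^ i) * h2
      have huq2 : ((QQ Y) ^ 2 ^ i + (BB X₁ Y) ^ 2 ^ i) ^ ((2 ^ t) ^ 2)
          = (QQ Y) ^ 2 ^ i + (BB X₁ Y) ^ 2 ^ i :=
        fq_qe (hfq_add _ _ (hfq2i _ (hQfq Y)) (hfq2i _ (hBfq X₁ Y)))
      have hv0 : (BB Y a) ^ 2 ^ i ≠ 0 := by
        intro hvz
        have hYu : (1 + c) * (γ * Y + ((QQ Y) ^ 2 ^ i + (BB X₁ Y) ^ 2 ^ i)) = 0 := by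
          linear_combination hstar - hvz
        have hYu2 : γ * Y + ((QQ Y) ^ 2 ^ i + (BB X₁ Y) ^ 2 ^ i) = 0 := by
          rcases mul_eq_zero.mp hYu with hbad | hok
          · exact absurd hbad hc1
          · exact hok
        have hgy : γ * Y = (QQ Y) ^ 2 ^ i + (BB X₁ Y) ^ 2 ^ i := by
          linear_combination hYu2 - ((QQ Y) ^ 2 ^ i + (BB X₁ Y) ^ 2 ^ i) * h2
        have hYval : Y = γ⁻¹ * ((QQ Y) ^ 2 ^ i + (BB X₁ Y) ^ 2 ^ i) := by
          rw [← hgy, ← mul_assoc, inv_mul_cancel₀ hγ, one_mul]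
        have hYq2 : Y ^ ((2 ^ t) ^ 2) = Y := by
          conv_lhs => rw [hYval]
          rw [mul_pow, hγinv, huq2, ← hYval]
        have hq0 : QQ Y = 0 := trQ_fix hTr hneven hYq2
        have hb0 : BB X₁ Y = 0 := trB_fix_right hTr hfixall hYq2 X₁
        rw [hq0, hb0] at hYu2
        rw [zero_pow (by positivity), add_zero, add_zero] at hYu2
        rcases mul_eq_zero.mp hYu2 with hbad | hbad
        · exact hγ hbad
        · exact hY0 hbad
      have hgyu : γ * Y = ((QQ Y) ^ 2 ^ i + (BB X₁ Y) ^ 2 ^ i) + ((BB Y a) ^ 2 ^ i) * μ := by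
        have h5 : (1 + c) * (γ * Y)
            = (1 + c) * ((QQ Y) ^ 2 ^ i + (BB X₁ Y) ^ 2 ^ i) + (BB Y a) ^ 2 ^ i := by
          linear_combination hstar - ((1 + c) * ((QQ Y) ^ 2 ^ i + (BB X₁ Y) ^ 2 ^ i)
            + (BB Y a) ^ 2 ^ i) * h2
        have h6 : (1 + c) * (((QQ Y) ^ 2 ^ i + (BB X₁ Y) ^ 2 ^ i) + ((BB Y a) ^ 2 ^ i) * μ)
            = (1 + c) * ((QQ Y) ^ 2 ^ i + (BB X₁ Y) ^ 2 ^ i) + (BB Y a) ^ 2 ^ i := by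
          rw [hμ]
          field_simp
        exact mul_left_cancel₀ hc1 (h5.trans h6.symm)
      have hYform : Y = γ⁻¹ * ((QQ Y) ^ 2 ^ i + (BB X₁ Y) ^ 2 ^ i)
          + ((BB Y a) ^ 2 ^ i) * dm := by
        have h7 : γ⁻¹ * (γ * Y)
            = γ⁻¹ * (((QQ Y) ^ 2 ^ i + (BB X₁ Y) ^ 2 ^ i) + ((BB Y a) ^ 2 ^ i) * μ) := by
          rw [hgyu]
        rw [← mul_assoc, inv_mul_cancel₀ hγ, one_mul] at h7
        conv_lhs => rw [h7]
        rw [hdm, hμ]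
        ring
      have hvfq : ((BB Y a) ^ 2 ^ i) ^ 2 ^ t = (BB Y a) ^ 2 ^ i := hfq2i _ (hBfq Y a)
      have hAfix : (γ⁻¹ * ((QQ Y) ^ 2 ^ i + (BB X₁ Y) ^ 2 ^ i)) ^ ((2 ^ t) ^ 2)
          = γ⁻¹ * ((QQ Y) ^ 2 ^ i + (BB X₁ Y) ^ 2 ^ i) := by
        rw [mul_pow, hγinv, huq2]
      have hBYa : BB Y a = ((BB Y a) ^ 2 ^ i) * BB dm a := by
        conv_lhs => rw [hYform]
        rw [hBB, trB_add_left hTr, trB_smul_left hTr hvfq]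
        rw [← hBB, show BB (γ⁻¹ * ((QQ Y) ^ 2 ^ i + (BB X₁ Y) ^ 2 ^ i)) a = 0 from
          trB_fix_left hTr hfixall hAfix a, zero_add]
      have hQY : QQ Y = ((BB Y a) ^ 2 ^ i) ^ 2 * QQ dm := by
        conv_lhs => rw [hYform]
        rw [hQQ, hBB, trQ_add hTr, trQ_smul hTr hvfq]
        rw [← hQQ, ← hBB,
          show QQ (γ⁻¹ * ((QQ Y) ^ 2 ^ i + (BB X₁ Y) ^ 2 ^ i)) = 0 from
            trQ_fix hTr hneven hAfix,
          show BB (γ⁻¹ * ((QQ Y) ^ 2 ^ i + (BB X₁ Y) ^ 2 ^ i)) (((BB Y a) ^ 2 ^ i) * dm) = 0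
            from trB_fix_left hTr hfixall hAfix _]
        ring
      have hBXY : BB X₁ Y = ((BB Y a) ^ 2 ^ i) * BB X₁ dm := by
        conv_lhs => rw [hYform]
        rw [hBB, trB_add_right hTr, trB_smul_right hTr hvfq]
        rw [← hBB, show BB X₁ (γ⁻¹ * ((QQ Y) ^ 2 ^ i + (BB X₁ Y) ^ 2 ^ i)) = 0 from
          trB_fix_right hTr hfixall hAfix X₁, zero_add]
      refine ⟨(BB Y a) ^ 2 ^ i, hv0, hvfq, ?_, ?_⟩
      · conv_lhs => rw [hBYa]
        rw [mul_pow]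
      · rw [hX']
        congr 1
        conv_lhs => rw [hYform]
        rw [hQY, hBXY]
    obtain ⟨v₂, hv20, hv2q, hv2M, hX2f⟩ := perpair X₂ hs2 hne12.symm
    have key : ∀ X' : F, h (X' + a) + c * h X' = b → X' ≠ X₁ → X' = X₂ := by
      intro X' hsX hneX
      obtain ⟨v₃, hv30, hv3q, hv3M, hX3f⟩ := perpair X' hsX hneX
      have hM0 : (BB dm a) ^ 2 ^ i ≠ 0 := by
        intro hM
        rw [hM, mul_zero] at hv2M
        exact hv20 hv2M
      have hrel : v₂ ^ 2 ^ i * v₃ = v₃ ^ 2 ^ i * v₂ := by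
        apply mul_right_cancel₀ hM0
        calc v₂ ^ 2 ^ i * v₃ * (BB dm a) ^ 2 ^ i
            = (v₂ ^ 2 ^ i * (BB dm a) ^ 2 ^ i) * v₃ := by ring
          _ = v₂ * v₃ := by rw [← hv2M]
          _ = (v₃ ^ 2 ^ i * (BB dm a) ^ 2 ^ i) * v₂ := by rw [← hv3M]; ring
          _ = v₃ ^ 2 ^ i * v₂ * (BB dm a) ^ 2 ^ i := by ring
      have hwfix : (v₂ * v₃⁻¹) ^ 2 ^ i = v₂ * v₃⁻¹ := by
        rw [mul_pow, inv_pow]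
        field_simp
        linear_combination hrel
      have hwq : (v₂ * v₃⁻¹) ^ 2 ^ t = v₂ * v₃⁻¹ := by
        rw [mul_pow, inv_pow, hv2q, hv3q]
      have hw2 := fixed_gcd i t (v₂ * v₃⁻¹) hwfix hwq
      rw [hgcd] at hw2
      have hw2' : (v₂ * v₃⁻¹) ^ 2 = v₂ * v₃⁻¹ := by simpa using hw2
      have hwne : v₂ * v₃⁻¹ ≠ 0 := mul_ne_zero hv20 (inv_ne_zero hv30)
      have hw1 : v₂ * v₃⁻¹ = 1 := by
        have hsq : (v₂ * v₃⁻¹) * (v₂ * v₃⁻¹) = (v₂ * v₃⁻¹) * 1 := by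
          rw [mul_one, ← pow_two, hw2']
        exact mul_left_cancel₀ hwne hsq
      have hveq : v₃ = v₂ := ((mul_inv_eq_one₀ hv30).mp hw1).symm
      rw [hX3f, hX2f, hveq]
    have hsub : {X : F | h (X + a) + c * h X = b} ⊆ {X₁, X₂} := by
      intro X hX
      simp only [Set.mem_setOf_eq] at hX
      by_cases hXx : X = X₁
      · simp [hXx]
      · simp [key X hX hXx]
    calc Nat.card {X : F // h (X + a) + c * h X = b}
        = ({X : F | h (X + a) + c * h X = b} : Set F).ncard := Nat.card_coe_set_eq _
      _ ≤ ({X₁, X₂} : Set F).ncard := Set.ncard_le_ncard hsub (Set.toFinite _)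
      _ = 2 := Set.ncard_pair hne12
  · push_neg at hex
    calc Nat.card {X : F // h (X + a) + c * h X = b}
        = ({X : F | h (X + a) + c * h X = b} : Set F).ncard := Nat.card_coe_set_eq _
      _ ≤ 1 := by
          rw [Set.ncard_le_one (Set.toFinite _)]
          intro x hx y hy
          exact hex x y hx hy
      _ ≤ 2 := by norm_num
end

section
/- Let q = 2^t, n, t, i > 0 integers, γ ∈ F_{q^2} nonzero, c ∈ F_{q^{2n}} with c ≠ 1, and a ∈ F_q. Then for every b ∈ F_{q^{2n}}, the equation f(X+a) + c·f(X) = b, where f(X) = γX + Tr_{q^{2n}/q}(X^{2^i(q+1)}), is equivalent to γX + Tr_{q^{2n}/q}(X^{2^i(q+1)}) = B with B = (b + γa + Tr_{q^{2n}/q}(a^{2^i(q+1)}))/(1+c); in particular Tr_{q^{2n}/q}(((X+a)^{2^i})^{q+1}) + Tr_{q^{2n}/q}(X^{2^i(q+1)}) = Tr_{q^{2n}/q}(a^{2^i(q+1)}) for all X ∈ F_{q^{2n}} and a ∈ F_q. -/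
/-- for `a ∈ F_q` and `c ≠ 1`, the equation `f(X+a) + c·f(X) = b` is
equivalent to `γX + Tr(X^{2^i(q+1)}) = B`; in particular the trace cross terms vanish. -/
theorem stmt_12 {F : Type*} [Field F] [Fintype F] (t n i : ℕ)
    (ht : 0 < t) (hn : 0 < n) (hi : 0 < i)
    (hcard : Fintype.card F = (2 ^ t) ^ (2 * n))
    (Tr : F → F) (hTr : ∀ x, Tr x = ∑ j ∈ Finset.range (2 * n), x ^ ((2 ^ t) ^ j))
    (γ : F) (hγ : γ ≠ 0) (hγq2 : γ ^ ((2 ^ t) ^ 2) = γ)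
    (f : F → F) (hf : ∀ X, f X = γ * X + Tr (X ^ (2 ^ i * (2 ^ t + 1))))
    (c : F) (hc1 : c ≠ 1)
    (a : F) (ha : a ^ (2 ^ t) = a) (b : F)
    (B : F) (hB : B = (b + γ * a + Tr (a ^ (2 ^ i * (2 ^ t + 1)))) * (1 + c)⁻¹) :
    (∀ X : F, f (X + a) + c * f X = b ↔
      γ * X + Tr (X ^ (2 ^ i * (2 ^ t + 1))) = B) ∧
    (∀ X a' : F, a' ^ (2 ^ t) = a' →
      Tr (((X + a') ^ (2 ^ i)) ^ (2 ^ t + 1)) + Tr (X ^ (2 ^ i * (2 ^ t + 1))) =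
        Tr (a' ^ (2 ^ i * (2 ^ t + 1)))) := by
  -- characteristic 2
  haveI hchar2 : CharP F 2 := by
    obtain ⟨p, hp⟩ := CharP.exists F
    haveI := hp
    obtain ⟨m, hpp, hcard'⟩ := FiniteField.card F p
    have hdvd : p ∣ 2 ^ (t * (2 * n)) := by
      have h := hcard'.symm.trans hcard
      rw [← pow_mul] at h
      rw [← h]
      exact dvd_pow_self p m.pos.ne'
    have hp2 : p = 2 :=
      (Nat.prime_dvd_prime_iff_eq hpp Nat.prime_two).mp (hpp.dvd_of_dvd_pow hdvd)
    rwa [hp2] at hp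
  haveI : Fact (Nat.Prime 2) := ⟨Nat.prime_two⟩
  have hself : ∀ x : F, x + x = 0 := fun x => CharTwo.add_self_eq_zero x
  -- frobenius maps
  have hfrob : ∀ (x y : F) (k : ℕ), (x + y) ^ (2 ^ k) = x ^ (2 ^ k) + y ^ (2 ^ k) :=
    fun x y k => add_pow_char_pow x y 2 k
  have hfrobq : ∀ (x y : F) (j : ℕ), (x + y) ^ ((2 ^ t) ^ j) = x ^ ((2 ^ t) ^ j) + y ^ ((2 ^ t) ^ j) := by
    intro x y j
    rw [← pow_mul]
    exact hfrob x y (t * j)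
  have hTradd : ∀ x y : F, Tr (x + y) = Tr x + Tr y := by
    intro x y
    rw [hTr, hTr, hTr, ← Finset.sum_add_distrib]
    exact Finset.sum_congr rfl fun j _ => hfrobq x y j
  have hq2n : ∀ x : F, x ^ ((2 ^ t) ^ (2 * n)) = x := fun x => by
    rw [← hcard]; exact FiniteField.pow_card x
  -- the key cancellation
  have key : ∀ X a' : F, a' ^ (2 ^ t) = a' →
      Tr (((X + a') ^ (2 ^ i)) ^ (2 ^ t + 1)) + Tr (X ^ (2 ^ i * (2 ^ t + 1))) =
        Tr (a' ^ (2 ^ i * (2 ^ t + 1))) := by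
    intro X a' ha'
    set u := X ^ (2 ^ i) with hu
    set v := a' ^ (2 ^ i) with hvdef
    have hv : v ^ (2 ^ t) = v := by
      rw [hvdef, pow_right_comm, ha']
    have hvj : ∀ j : ℕ, v ^ ((2 ^ t) ^ j) = v := by
      intro j
      induction j with
      | zero => simp
      | succ k ih => rw [pow_succ, pow_mul, ih, hv]
    have hsplit : (X + a') ^ (2 ^ i) = u + v := hfrob X a' i
    have hexp : (u + v) ^ (2 ^ t + 1) =
        u ^ (2 ^ t + 1) + v ^ (2 ^ t + 1) + v * (u ^ (2 ^ t) + u) := by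
      rw [pow_succ (u + v), pow_succ u, pow_succ v, hfrob u v t, hv]
      ring
    have hcross : Tr (v * (u ^ (2 ^ t) + u)) = 0 := by
      rw [hTr]
      have hterm : ∀ j ∈ Finset.range (2 * n),
          (v * (u ^ (2 ^ t) + u)) ^ ((2 ^ t) ^ j) =
            v * (u ^ ((2 ^ t) ^ (j + 1)) - u ^ ((2 ^ t) ^ j)) := by
        intro j _
        rw [mul_pow, hvj j, hfrobq (u ^ (2 ^ t)) u j, ← pow_mul, ← pow_succ',
          sub_eq_add_neg, CharTwo.neg_eq]
      rw [Finset.sum_congr rfl hterm, ← Finset.mul_sum,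
        Finset.sum_range_sub (fun j => u ^ ((2 ^ t) ^ j)), hq2n, pow_zero, pow_one,
        sub_self, mul_zero]
    have hXE : X ^ (2 ^ i * (2 ^ t + 1)) = u ^ (2 ^ t + 1) := by rw [pow_mul]
    have haE : a' ^ (2 ^ i * (2 ^ t + 1)) = v ^ (2 ^ t + 1) := by rw [pow_mul]
    rw [hsplit, hXE, haE, hexp, hTradd, hTradd, hcross, add_zero]
    rw [add_comm (Tr (u ^ (2 ^ t + 1))) (Tr (v ^ (2 ^ t + 1))), add_assoc,
      hself (Tr (u ^ (2 ^ t + 1))), add_zero]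
  refine ⟨?_, key⟩
  intro X
  have hkey := key X a ha
  have hXa : Tr ((X + a) ^ (2 ^ i * (2 ^ t + 1))) =
      Tr (a ^ (2 ^ i * (2 ^ t + 1))) + Tr (X ^ (2 ^ i * (2 ^ t + 1))) := by
    rw [pow_mul, ← hkey, add_assoc, hself, add_zero]
  have h1c : (1 : F) + c ≠ 0 := by
    intro h
    apply hc1
    have : c = -1 := by linear_combination h
    rw [this, CharTwo.neg_eq]
  rw [hf, hf, hXa, hB]
  rw [← div_eq_mul_inv, eq_div_iff h1c]
  constructor
  · intro h
    linear_combination h - hself (γ * a) - hself (Tr (a ^ (2 ^ i * (2 ^ t + 1))))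
  · intro h
    linear_combination h + hself (γ * a) + hself (Tr (a ^ (2 ^ i * (2 ^ t + 1))))
end

section
/- Let q = 2^t, n, t, i > 0 integers with gcd(i, t) = 1, γ ∈ F_{q^2} nonzero, c ∈ F_{q^{2n}} \ F_{q^2}, a ∈ F_{q^{2n}} \ F_q, b ∈ F_{q^{2n}}. Set C = 1/(1+c), B = C(b + γa + Tr_{q^{2n}/q}(a^{2^i(q+1)})), and C₁ = Tr_{q^{2n}/q}((((C^{q^2} + C)a^q)/γ)^{2^i}). If C₁ = 0, then the equation f(X+a) + c·f(X) = b, with f(X) = γX + Tr_{q^{2n}/q}(X^{2^i(q+1)}), has exactly one solution X ∈ F_{q^{2n}}. -/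
/-- with `gcd(i,t) = 1`, `c ∉ F_{q^2}`, `a ∉ F_q`, and `C₁ = 0`, the equation
`f(X+a) + c·f(X) = b` has exactly one solution, where `f(X) = γX + Tr(X^{2^i(q+1)})`. -/
theorem stmt_19 {F : Type*} [Field F] [Fintype F] (t n i : ℕ)
    (ht : 0 < t) (hn : 0 < n) (hi : 0 < i) (hgcd : Nat.gcd i t = 1)
    (hcard : Fintype.card F = (2 ^ t) ^ (2 * n))
    (Tr : F → F) (hTr : ∀ x, Tr x = ∑ j ∈ Finset.range (2 * n), x ^ ((2 ^ t) ^ j))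
    (γ : F) (hγ : γ ≠ 0) (hγq2 : γ ^ ((2 ^ t) ^ 2) = γ)
    (f : F → F) (hf : ∀ X, f X = γ * X + Tr (X ^ (2 ^ i * (2 ^ t + 1))))
    (c : F) (hc : c ^ ((2 ^ t) ^ 2) ≠ c)
    (a : F) (ha : a ^ (2 ^ t) ≠ a) (b : F)
    (C B C₁ : F)
    (hC : C = (1 + c)⁻¹)
    (hB : B = C * (b + γ * a + Tr (a ^ (2 ^ i * (2 ^ t + 1)))))
    (hC₁ : C₁ = Tr (((C ^ ((2 ^ t) ^ 2) + C) * a ^ (2 ^ t) * γ⁻¹) ^ (2 ^ i)))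
    (hC₁0 : C₁ = 0) :
    ∃! X : F, f (X + a) + c * f X = b := by
  classical
  -- characteristic 2
  have hring : ringChar F = 2 := by
    obtain ⟨k, hpk, hk⟩ := FiniteField.card F (ringChar F)
    rw [hcard, ← pow_mul] at hk
    have hd : ringChar F ∣ 2 ^ (t * (2 * n)) := by
      rw [hk]; exact dvd_pow_self _ k.pos.ne'
    exact (Nat.prime_dvd_prime_iff_eq hpk Nat.prime_two).mp
      (hpk.dvd_of_dvd_pow hd)
  haveI hchar : CharP F 2 := hring ▸ ringChar.charP F
  haveI : Fact (Nat.Prime 2) := ⟨Nat.prime_two⟩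
  have htwo : (2 : F) = 0 := CharTwo.two_eq_zero
  -- basic frobenius additivity
  have hadd : ∀ (k : ℕ) (x y : F), (x + y) ^ (2 ^ k) = x ^ (2 ^ k) + y ^ (2 ^ k) :=
    fun k x y => add_pow_char_pow x y 2 k
  set q : ℕ := 2 ^ t with hq
  set K : ℕ := 2 ^ i with hK
  have haddq : ∀ (j : ℕ) (x y : F), (x + y) ^ (q ^ j) = x ^ (q ^ j) + y ^ (q ^ j) := by
    intro j x y
    rw [hq, ← pow_mul]
    exact hadd _ x y
  have hpow_card : ∀ x : F, x ^ (q ^ (2 * n)) = x := fun x => by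
    rw [← hcard]; exact FiniteField.pow_card x
  -- fixed points of frobenius
  have hfixj : ∀ lam : F, lam ^ q = lam → ∀ j, lam ^ (q ^ j) = lam := by
    intro lam hl j
    induction j with
    | zero => simp
    | succ j ih => rw [pow_succ, pow_mul, ih, hl]
  have hfix2 : ∀ lam : F, lam ^ q = lam → lam ^ (q ^ 2) = lam := fun lam hl => hfixj lam hl 2
  have hfixpow : ∀ (lam : F) (m : ℕ), lam ^ q = lam → (lam ^ m) ^ q = lam ^ m := by
    intro lam m hl
    rw [← pow_mul, mul_comm, pow_mul, hl]
  -- trace lemmas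
  have Tr_add : ∀ x y : F, Tr (x + y) = Tr x + Tr y := by
    intro x y
    rw [hTr, hTr, hTr, ← Finset.sum_add_distrib]
    exact Finset.sum_congr rfl fun j _ => haddq j x y
  have Tr_frob : ∀ x : F, Tr (x ^ q) = Tr x := by
    intro x
    rw [hTr, hTr]
    have key : ∀ j : ℕ, (x ^ q) ^ (q ^ j) = x ^ (q ^ (j + 1)) := by
      intro j
      rw [← pow_mul, ← pow_succ']
    have h1 : (∑ j ∈ Finset.range (2 * n), x ^ (q ^ (j + 1))) + x ^ (q ^ 0)
        = (∑ j ∈ Finset.range (2 * n), x ^ (q ^ j)) + x ^ (q ^ (2 * n)) := by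
      rw [← Finset.sum_range_succ' (fun j => x ^ (q ^ j)) (2 * n),
        Finset.sum_range_succ]
    rw [hpow_card, pow_zero, pow_one] at h1
    calc ∑ j ∈ Finset.range (2 * n), (x ^ q) ^ (q ^ j)
        = ∑ j ∈ Finset.range (2 * n), x ^ (q ^ (j + 1)) :=
          Finset.sum_congr rfl fun j _ => key j
      _ = ∑ j ∈ Finset.range (2 * n), x ^ (q ^ j) := add_right_cancel h1
  have hsum_pow : ∀ (s : Finset ℕ) (g : ℕ → F), (∑ j ∈ s, g j) ^ q = ∑ j ∈ s, (g j) ^ q := by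
    intro s g
    induction s using Finset.cons_induction with
    | empty =>
        simp only [Finset.sum_empty]
        exact zero_pow (by positivity)
    | cons a s ha ih =>
        rw [Finset.sum_cons, Finset.sum_cons, hq, hadd, ← hq, ih]
  have Tr_pow_q : ∀ x : F, (Tr x) ^ q = Tr x := by
    intro x
    have h1 : (Tr x) ^ q = Tr (x ^ q) := by
      rw [hTr x, hsum_pow, hTr (x ^ q)]
      exact Finset.sum_congr rfl fun j _ => pow_right_comm x (q ^ j) q
    rw [h1, Tr_frob]
  have Tr_smul : ∀ lam x : F, lam ^ q = lam → Tr (lam * x) = lam * Tr x := by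
    intro lam x hl
    rw [hTr, hTr, Finset.mul_sum]
    exact Finset.sum_congr rfl fun j _ => by rw [mul_pow, hfixj lam hl j]
  have Tr_fq : ∀ lam : F, lam ^ q = lam → Tr lam = 0 := by
    intro lam hl
    rw [hTr]
    calc ∑ j ∈ Finset.range (2 * n), lam ^ (q ^ j)
        = ∑ _j ∈ Finset.range (2 * n), lam :=
          Finset.sum_congr rfl fun j _ => hfixj lam hl j
      _ = (2 * n) • lam := by rw [Finset.sum_const, Finset.card_range]
      _ = ((2 * n : ℕ) : F) * lam := by rw [nsmul_eq_mul]
      _ = 0 := by push_cast; rw [htwo]; ring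
  have Tr_sym0 : ∀ z : F, Tr ((z + z ^ q) ^ K) = 0 := by
    intro z
    have h1 : (z + z ^ q) ^ K = z ^ K + (z ^ K) ^ q := by
      rw [hK, hadd, ← hK, pow_right_comm]
    rw [h1, Tr_add, Tr_frob, CharTwo.add_self_eq_zero]
  have haddK : ∀ x y : F, (x + y) ^ K = x ^ K + y ^ K := fun x y => by
    rw [hK]; exact hadd i x y
  have haddQ : ∀ x y : F, (x + y) ^ q = x ^ q + y ^ q := fun x y => by
    rw [hq]; exact hadd t x y
  -- setup
  have hone : (1 : F) + c ≠ 0 := by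
    intro h
    have hc1 : c = 1 := by linear_combination h - htwo
    exact hc (by rw [hc1, one_pow])
  have hCinv : (1 + c) * C = 1 := by rw [hC]; exact mul_inv_cancel₀ hone
  set v0 : F := (B ^ (q ^ 2) + B) * γ⁻¹ with hv0
  set w : F := (C ^ (q ^ 2) + C) * γ⁻¹ with hw
  set β : F := Tr ((a ^ q * v0) ^ K) with hβ
  have hβq : β ^ q = β := Tr_pow_q _
  have hC₁' : Tr ((a ^ q * w) ^ K) = 0 := by
    have h1 : a ^ q * w = (C ^ (q ^ 2) + C) * a ^ q * γ⁻¹ := by rw [hw]; ring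
    rw [h1, ← hC₁, hC₁0]
  set N : F := γ ^ (q + 1) with hN
  have hNq : N ^ q = N := by
    rw [hN, ← pow_mul]
    have h1 : (q + 1) * q = q ^ 2 + q := by ring
    rw [h1, pow_add, hγq2, pow_succ]
    ring
  have hN0 : N ≠ 0 := pow_ne_zero _ hγ
  have hNKq : ((N ^ K)⁻¹) ^ q = (N ^ K)⁻¹ := by
    rw [inv_pow, pow_right_comm, hNq]
  set E : F := Tr (((B + C * β) ^ (q + 1)) ^ K) with hE
  set sstar : F := (N ^ K)⁻¹ * E with hsstar
  have hsstarq : sstar ^ q = sstar := by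
    rw [hsstar, mul_pow, hNKq, Tr_pow_q]
  set Xstar : F := γ⁻¹ * (B + sstar + C * β) with hXstar
  -- key lemma L1: computing Tr((aX^q + a^q X)^K) from the q²-relation
  have L1 : ∀ X μ : F, μ ^ q = μ → X ^ (q ^ 2) = X + (v0 + w * μ) →
      Tr ((a * X ^ q + a ^ q * X) ^ K) = β := by
    intro X μ hμ hX
    have hμK : (μ ^ K) ^ q = μ ^ K := hfixpow μ K hμ
    have e1 : ((a * X ^ q) ^ K) ^ q
        = (a ^ q * X) ^ K + ((a ^ q * v0) ^ K + μ ^ K * ((a ^ q * w) ^ K)) := by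
      have c1 : ((a * X ^ q) ^ K) ^ q = ((a * X ^ q) ^ q) ^ K := pow_right_comm _ _ _
      have c2 : (a * X ^ q) ^ q = a ^ q * X ^ (q ^ 2) := by
        rw [mul_pow, ← pow_mul, ← pow_two]
      have c3 : a ^ q * X ^ (q ^ 2) = a ^ q * X + (a ^ q * v0 + (a ^ q * w) * μ) := by
        rw [hX]; ring
      rw [c1, c2, c3, haddK (a ^ q * X), haddK (a ^ q * v0), mul_pow (a ^ q * w) μ]
      ring
    have e2 : Tr ((a * X ^ q) ^ K)
        = Tr ((a ^ q * X) ^ K) + (β + μ ^ K * Tr ((a ^ q * w) ^ K)) := by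
      calc Tr ((a * X ^ q) ^ K) = Tr (((a * X ^ q) ^ K) ^ q) := (Tr_frob _).symm
        _ = _ := by rw [e1, Tr_add, Tr_add, Tr_smul _ _ hμK, hβ]
    have e3 : (a * X ^ q + a ^ q * X) ^ K = (a * X ^ q) ^ K + (a ^ q * X) ^ K :=
      haddK _ _
    rw [e3, Tr_add, e2, hC₁']
    linear_combination (Tr ((a ^ q * X) ^ K)) * htwo
  -- key lemma L2: value of Tr on K*(q+1)-th powers of candidate solutions
  have L2 : ∀ σ : F, σ ^ q = σ →
      Tr ((γ⁻¹ * (B + σ + C * β)) ^ (K * (q + 1))) = (N ^ K)⁻¹ * E := by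
    intro σ hσ
    have hxq : (B + C * β) ^ q = B ^ q + C ^ q * β := by
      rw [haddQ B (C * β), mul_pow C β, hβq]
    have hsum : (B + σ + C * β) ^ q = (B + C * β) ^ q + σ := by
      rw [haddQ (B + σ) (C * β), haddQ B σ, hσ, hxq, mul_pow C β, hβq]
      ring
    have hNinv : N⁻¹ = (γ ^ q)⁻¹ * γ⁻¹ := by rw [hN, pow_succ, mul_inv]
    have hpow1 : (γ⁻¹ * (B + σ + C * β)) ^ (q + 1)
        = N⁻¹ * ((B + C * β) ^ (q + 1)
            + σ * ((B + C * β) + (B + C * β) ^ q) + σ ^ 2) := by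
      rw [pow_succ (γ⁻¹ * (B + σ + C * β)), mul_pow, hsum, inv_pow, hNinv]
      ring
    have hpow2 : (γ⁻¹ * (B + σ + C * β)) ^ (K * (q + 1))
        = (N ^ K)⁻¹ * (((B + C * β) ^ (q + 1)) ^ K
            + σ ^ K * ((B + C * β) + (B + C * β) ^ q) ^ K + (σ ^ K) ^ 2) := by
      rw [mul_comm K (q + 1), pow_mul, hpow1, mul_pow N⁻¹, inv_pow,
        haddK ((B + C * β) ^ (q + 1) + σ * ((B + C * β) + (B + C * β) ^ q)) (σ ^ 2),
        haddK ((B + C * β) ^ (q + 1)) (σ * ((B + C * β) + (B + C * β) ^ q)),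
        mul_pow σ ((B + C * β) + (B + C * β) ^ q), pow_right_comm σ 2]
    rw [hpow2, Tr_smul _ _ hNKq, Tr_add, Tr_add, Tr_smul _ _ (hfixpow σ K hσ), Tr_sym0,
      Tr_fq _ (hfixpow (σ ^ K) 2 (hfixpow σ K hσ)), hE]
    ring
  -- the equation rewritten
  have hkey : ∀ X : F, f (X + a) + c * f X + b
      = (1 + c) * ((γ * X + Tr (X ^ (K * (q + 1)))
          + C * Tr ((a * X ^ q + a ^ q * X) ^ K)) + B) := by
    intro X
    have hexp : (X + a) ^ (K * (q + 1))
        = X ^ (K * (q + 1)) + ((a * X ^ q) ^ K + ((a ^ q * X) ^ K + a ^ (K * (q + 1)))) := by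
      rw [mul_comm K (q + 1)]
      simp only [pow_mul]
      have h1 : (X + a) ^ (q + 1) = X ^ (q + 1) + (a * X ^ q + (a ^ q * X + a ^ (q + 1))) := by
        rw [pow_succ (X + a), haddQ X a]
        ring
      rw [h1, haddK (X ^ (q + 1)), haddK (a * X ^ q), haddK (a ^ q * X)]
    have hT : Tr ((a * X ^ q + a ^ q * X) ^ K) = Tr ((a * X ^ q) ^ K) + Tr ((a ^ q * X) ^ K) := by
      rw [haddK (a * X ^ q) (a ^ q * X), Tr_add]
    rw [hf, hf, hexp, Tr_add, Tr_add, Tr_add, hT, hB]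
    linear_combination (-(Tr ((a * X ^ q) ^ K) + Tr ((a ^ q * X) ^ K) + b + γ * a
      + Tr (a ^ (K * (q + 1))))) * hCinv
  -- uniqueness
  have huniq : ∀ X : F,
      γ * X + Tr (X ^ (K * (q + 1))) + C * Tr ((a * X ^ q + a ^ q * X) ^ K) = B → X = Xstar := by
    intro X hEq
    set u : F := Tr ((a * X ^ q + a ^ q * X) ^ K) with hu
    set s : F := Tr (X ^ (K * (q + 1))) with hs
    have huq : u ^ q = u := Tr_pow_q _
    have hsq : s ^ q = s := Tr_pow_q _
    have hEq2 : γ * X ^ (q ^ 2) + s + C ^ (q ^ 2) * u = B ^ (q ^ 2) := by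
      have h0 : (γ * X + s + C * u) ^ (q ^ 2) = B ^ (q ^ 2) := by rw [hEq]
      rw [haddq 2, haddq 2, mul_pow, mul_pow, hγq2, hfix2 s hsq, hfix2 u huq] at h0
      exact h0
    have hXq2 : X ^ (q ^ 2) = X + (v0 + w * u) := by
      have h3 : γ * (X ^ (q ^ 2) + X) = (B ^ (q ^ 2) + B) + (C ^ (q ^ 2) + C) * u := by
        linear_combination hEq2 + hEq - (s + C ^ (q ^ 2) * u + C * u) * htwo
      have hγγ : γ⁻¹ * γ = 1 := inv_mul_cancel₀ hγ
      rw [hv0, hw]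
      linear_combination γ⁻¹ * h3 - (X ^ (q ^ 2) + X) * hγγ - X * htwo
    have hu' : u = β := by
      rw [hu]
      exact L1 X u huq hXq2
    have hXval : X = γ⁻¹ * (B + s + C * β) := by
      have h4 : γ * X = B + s + C * β := by
        rw [← hu']
        linear_combination hEq - (s + C * u) * htwo
      rw [← h4, ← mul_assoc, inv_mul_cancel₀ hγ, one_mul]
    have hs' : s = sstar := by
      have h5 := L2 s hsq
      rw [← hXval] at h5
      rw [hs, hsstar]
      exact h5
    rw [hXval, hs', hXstar]
  -- existence facts for Xstar
  have hXsq2 : Xstar ^ (q ^ 2) = Xstar + (v0 + w * β) := by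
    have h1 : Xstar ^ (q ^ 2) = γ⁻¹ * (B ^ (q ^ 2) + sstar + C ^ (q ^ 2) * β) := by
      rw [hXstar, mul_pow γ⁻¹, haddq 2, haddq 2, mul_pow C, hfix2 sstar hsstarq,
        hfix2 β hβq, inv_pow, hγq2]
    rw [h1, hXstar, hv0, hw]
    linear_combination (-(γ⁻¹ * B + γ⁻¹ * C * β)) * htwo
  have hTXs : Tr ((a * Xstar ^ q + a ^ q * Xstar) ^ K) = β := L1 Xstar β hβq hXsq2
  have hTrXse : Tr (Xstar ^ (K * (q + 1))) = sstar := by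
    have h5 := L2 sstar hsstarq
    rw [← hXstar] at h5
    rw [h5, hsstar]
  have hγXs : γ * Xstar = B + sstar + C * β := by
    rw [hXstar, ← mul_assoc, mul_inv_cancel₀ hγ, one_mul]
  have hgoal : γ * Xstar + Tr (Xstar ^ (K * (q + 1)))
      + C * Tr ((a * Xstar ^ q + a ^ q * Xstar) ^ K) = B := by
    rw [hTrXse, hTXs, hγXs]
    linear_combination (sstar + C * β) * htwo
  -- conclusion
  refine ⟨Xstar, ?_, ?_⟩
  · have hk := hkey Xstar
    rw [hgoal] at hk
    rw [CharTwo.add_self_eq_zero, mul_zero] at hk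
    linear_combination hk - b * htwo
  · intro Y hY
    have hk := hkey Y
    rw [hY, CharTwo.add_self_eq_zero] at hk
    have h6 : (γ * Y + Tr (Y ^ (K * (q + 1)))
        + C * Tr ((a * Y ^ q + a ^ q * Y) ^ K)) + B = 0 :=
      (mul_eq_zero.mp hk.symm).resolve_left hone
    have h7 : γ * Y + Tr (Y ^ (K * (q + 1)))
        + C * Tr ((a * Y ^ q + a ^ q * Y) ^ K) = B := by
      linear_combination h6 - B * htwo
    exact huniq Y h7
end
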